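/- arXiv:2603.03373 — 6 statements merged into one kernel-verified Lean document; each statement's English description precedes it below -/
import Mathlib

section
/- (Ivory's theorem) If 0 ≤ u < 1 then (1/π) ∫₀^π √((1 - u e^{2it})(1 - u e^{-2it})) dt = ∑_{n=0}^∞ (c_n)² u^{2n}, where c_n = -(1·1·3·5⋯(2n-3))/(2^n n!) is the n-th coefficient of the binomial series for (1-x)^{1/2}. -/
open Finset intervalIntegral MeasureTheory

noncomputable def bb (c : ℕ → ℝ) (n : ℕ) : ℝ := ∑ k ∈ range (n+1), c k * c (n-k)

lemma prod_two_mul_add_two (m : ℕ) :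
    ∏ k ∈ range m, (2 * (k : ℝ) + 2) = 2 ^ m * m.factorial := by
  induction m with
  | zero => simp
  | succ n ih =>
    rw [prod_range_succ, ih, Nat.factorial_succ]
    push_cast
    ring

section Aux
variable (c : ℕ → ℝ) (hc0 : c 0 = 1)
    (hc : ∀ n : ℕ, 1 ≤ n →
      c n = -(∏ k ∈ Finset.range (n - 1), (2 * (k : ℝ) + 1)) / (2 ^ n * n.factorial))

include hc0 hc in
lemma c_rec (k : ℕ) : 2 * ((k:ℝ)+1) * c (k+1) = (2*(k:ℝ)-1) * c k := by
  rcases Nat.eq_zero_or_pos k with h | h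
  · subst h
    rw [hc 1 le_rfl, hc0]
    norm_num
  obtain ⟨m, rfl⟩ := Nat.exists_eq_add_of_le h
  rw [hc (1+m) (by omega), hc (1+m+1) (by omega)]
  have h1 : (1+m) - 1 = m := by omega
  have h2 : (1+m+1) - 1 = m + 1 := by omega
  rw [h1, h2, prod_range_succ]
  have hf1 : ((1+m+1).factorial : ℝ) = ((1:ℕ)+m+1) * (1+m).factorial := by
    exact_mod_cast congrArg Nat.cast (Nat.factorial_succ (1+m))
  rw [hf1]
  have hfac : (0:ℝ) < ((1+m).factorial : ℝ) := by positivity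
  field_simp
  push_cast
  ring


noncomputable def SS (n : ℕ) : ℝ := ∑ k ∈ range (n+1), (k:ℝ) * (c k * c (n-k))

lemma two_SS (n : ℕ) : 2 * SS c n = n * bb c n := by
  have hrefl : SS c n = ∑ k ∈ range (n+1), ((n-k : ℕ):ℝ) * (c (n-k) * c k) := by
    rw [SS, ← Finset.sum_range_reflect]
    apply Finset.sum_congr rfl
    intro k hk
    simp only [Finset.mem_range] at hk
    have h1 : n + 1 - 1 - k = n - k := by omega
    have h2 : n - (n - k) = k := by omega
    rw [h1, h2]
  rw [two_mul]
  nth_rewrite 2 [hrefl]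
  rw [SS, bb, Finset.mul_sum, ← Finset.sum_add_distrib]
  apply Finset.sum_congr rfl
  intro k hk
  simp only [Finset.mem_range] at hk
  have : ((n-k : ℕ):ℝ) = (n:ℝ) - k := by
    rw [Nat.cast_sub (by omega)]
  rw [this]
  ring

include hc0 hc in
lemma key (n : ℕ) : ((n:ℝ)+1) * bb c (n+1) = ((n:ℝ)-1) * bb c n := by
  have h1 : 2 * SS c (n+1) = 2 * SS c n - bb c n := by
    have : SS c (n+1) = ∑ i ∈ range (n+1), ((i:ℝ)+1) * (c (i+1) * c (n-i)) := by
      rw [SS, Finset.sum_range_succ']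
      have : ∀ i ∈ range (n+1), ((i+1:ℕ):ℝ) * (c (i+1) * c (n+1-(i+1))) = ((i:ℝ)+1) * (c (i+1) * c (n-i)) := by
        intro i hi
        have : n + 1 - (i+1) = n - i := by omega
        rw [this]; push_cast; ring
      rw [Finset.sum_congr rfl this]
      simp
    rw [this, SS, bb, Finset.mul_sum, Finset.mul_sum, ← Finset.sum_sub_distrib]
    apply Finset.sum_congr rfl
    intro i hi
    have := c_rec c hc0 hc i
    linear_combination c (n-i) * this
  have h2 := two_SS c n
  have h3 := two_SS c (n+1)
  push_cast at h3
  linarith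

include hc0 hc in
lemma bb_zero : bb c 0 = 1 := by simp [bb, hc0]

include hc0 hc in
lemma bb_one : bb c 1 = -1 := by
  have h1 : c 1 = -(1/2) := by
    rw [hc 1 le_rfl]; norm_num
  simp [bb, Finset.sum_range_succ, hc0, h1]
  norm_num [h1, hc0]

include hc0 hc in
lemma bb_eq_zero (n : ℕ) : bb c (n+2) = 0 := by
  induction n with
  | zero =>
    have := key c hc0 hc 1
    push_cast at this
    rw [bb_one c hc0 hc] at this
    norm_num at this
    linarith
  | succ m ih =>
    have := key c hc0 hc (m+2)
    rw [ih, mul_zero] at this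
    have h : ((m+2:ℕ):ℝ)+1 ≠ 0 := by positivity
    exact (mul_eq_zero.mp this).resolve_left h


include hc0 hc in
lemma abs_c_le (n : ℕ) : |c n| ≤ 1 := by
  rcases Nat.eq_zero_or_pos n with h | h
  · simp [h, hc0]
  have hprod : (0:ℝ) ≤ ∏ k ∈ range (n-1), (2 * (k : ℝ) + 1) := by positivity
  have hden : (0:ℝ) < 2 ^ n * n.factorial := by positivity
  rw [hc n h, abs_div, abs_neg, abs_of_nonneg hprod, abs_of_pos hden, div_le_one hden]
  calc ∏ k ∈ range (n-1), (2 * (k : ℝ) + 1)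
      ≤ ∏ k ∈ range (n-1), (2 * (k : ℝ) + 2) := by
        apply Finset.prod_le_prod (fun i _ => by positivity) (fun i _ => by linarith)
    _ = 2 ^ (n-1) * (n-1).factorial := prod_two_mul_add_two _
    _ ≤ 2 ^ n * n.factorial := by
        apply mul_le_mul
        · exact pow_le_pow_right₀ one_le_two (Nat.sub_le n 1)
        · exact_mod_cast Nat.cast_le.mpr (Nat.factorial_le (Nat.sub_le n 1))
        · positivity
        · positivity

include hc0 hc in
lemma summable_norm_cz (z : ℂ) (hz : ‖z‖ < 1) : Summable (fun n => ‖(c n : ℂ) * z ^ n‖) := by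
  apply Summable.of_nonneg_of_le (fun n => norm_nonneg _) (fun n => ?_)
    (summable_geometric_of_lt_one (norm_nonneg z) hz)
  rw [norm_mul, norm_pow]
  calc ‖(c n : ℂ)‖ * ‖z‖^n ≤ 1 * ‖z‖^n := by
        gcongr
        simpa [Complex.norm_real] using abs_c_le c hc0 hc n
    _ = ‖z‖^n := one_mul _

include hc0 hc in
lemma sq_tsum (z : ℂ) (hz : ‖z‖ < 1) : (∑' n, (c n : ℂ) * z ^ n)^2 = 1 - z := by
  have hs := summable_norm_cz c hc0 hc z hz
  rw [sq, tsum_mul_tsum_eq_tsum_sum_antidiagonal_of_summable_norm hs hs]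
  have heq : ∀ n : ℕ, ∑ kl ∈ Finset.HasAntidiagonal.antidiagonal n,
      ((c kl.1 : ℂ) * z^kl.1) * ((c kl.2:ℂ) * z^kl.2) = (bb c n : ℂ) * z ^ n := by
    intro n
    rw [Finset.Nat.sum_antidiagonal_eq_sum_range_succ_mk, bb]
    push_cast
    rw [Finset.sum_mul]
    apply Finset.sum_congr rfl
    intro k hk
    simp only [Finset.mem_range] at hk
    have hzz : z ^ k * z ^ (n-k) = z ^ n := by
      rw [← pow_add]; congr 1; omega
    calc (c k : ℂ) * z^k * ((c (n-k):ℂ) * z^(n-k))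
        = (c k : ℂ) * (c (n-k):ℂ) * (z^k * z^(n-k)) := by ring
      _ = (c k : ℂ) * (c (n-k):ℂ) * z^n := by rw [hzz]
  rw [tsum_congr heq, tsum_eq_sum (s := Finset.range 2) ?_]
  · rw [Finset.sum_range_succ, Finset.sum_range_one, bb_zero c hc0 hc, bb_one c hc0 hc]
    push_cast
    ring
  · intro n hn
    simp only [Finset.mem_range, not_lt] at hn
    obtain ⟨m, rfl⟩ := Nat.exists_eq_add_of_le hn
    rw [show 2 + m = m + 2 by omega, bb_eq_zero c hc0 hc]
    simp


end Aux

set_option maxHeartbeats 1000000 in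
/-- Ivory's theorem: for `0 ≤ u < 1`,
`(1/π) ∫₀^π √((1 - u e^{2it})(1 - u e^{-2it})) dt = ∑ (c n)² u^(2n)`,
where the integrand `√((1 - u e^{2it})(1 - u e^{-2it}))` is the modulus
`|1 - u e^{2it}|` since the two factors are complex conjugates, and `c n`
is the `n`-th Maclaurin coefficient of `(1-x)^(1/2)`. -/
theorem stmt_3 (u : ℝ) (hu0 : 0 ≤ u) (hu1 : u < 1) (c : ℕ → ℝ)
    (hc0 : c 0 = 1)
    (hc : ∀ n : ℕ, 1 ≤ n →
      c n = -(∏ k ∈ Finset.range (n - 1), (2 * (k : ℝ) + 1)) / (2 ^ n * n.factorial)) :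
    (1 / Real.pi) *
        ∫ t in (0:ℝ)..Real.pi, ‖1 - (u : ℂ) * Complex.exp (2 * Complex.I * t)‖ =
      ∑' n : ℕ, (c n) ^ 2 * u ^ (2 * n) := by
  set e : ℝ → ℂ := fun t => Complex.exp (2 * Complex.I * t) with he
  set a : ℕ → ℝ := fun n => c n * u ^ n with ha
  have habs_e : ∀ t : ℝ, ‖e t‖ = 1 := by
    intro t
    simp [he, Complex.norm_exp]
  have ha_abs : ∀ n, |a n| ≤ u ^ n := by
    intro n
    rw [ha, abs_mul, abs_of_nonneg (pow_nonneg hu0 n)]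
    calc |c n| * u^n ≤ 1 * u^n := by gcongr; exact abs_c_le c hc0 hc n
      _ = u^n := one_mul _
  have ha_sum : Summable (fun n => |a n|) := by
    exact Summable.of_nonneg_of_le (fun n => abs_nonneg _) ha_abs
      (summable_geometric_of_lt_one hu0 hu1)
  set g : ℝ → ℂ := fun t => ∑' n, (a n : ℂ) * (e t)^n with hg
  have hz : ∀ t : ℝ, ‖(u:ℂ) * e t‖ < 1 := by
    intro t
    rw [norm_mul, habs_e, mul_one, Complex.norm_real,
      Real.norm_of_nonneg hu0]
    exact hu1
  have hg_eq : ∀ t, (∑' n, (c n:ℂ) * ((u:ℂ) * e t)^n) = g t := by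
    intro t
    apply tsum_congr
    intro n
    rw [mul_pow, ha]
    push_cast
    ring
  have hsq : ∀ t, (g t)^2 = 1 - (u:ℂ) * e t := by
    intro t
    rw [← hg_eq t]
    exact sq_tsum c hc0 hc _ (hz t)
  have habs1 : ∀ t, ((‖1 - (u:ℂ) * e t‖ : ℝ) : ℂ) = g t * (starRingEnd ℂ) (g t) := by
    intro t
    rw [Complex.mul_conj, Complex.normSq_eq_norm_sq, ← hsq t, norm_pow]
  have hintegral : ∫ t in (0:ℝ)..Real.pi, ‖1 - (u:ℂ) * e t‖
      = Real.pi * ∑' n, (a n * a n) := by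
    set E : ℝ → ℂ := fun t => Complex.exp (-(2 * Complex.I * t)) with hE
    have habs_e : ∀ t : ℝ, ‖e t‖ = 1 := by
      intro t; simp [he, Complex.norm_exp]
    have habs_E : ∀ t : ℝ, ‖E t‖ = 1 := by
      intro t; simp [hE, Complex.norm_exp]
    have hconj_e : ∀ t : ℝ, (starRingEnd ℂ) (e t) = E t := by
      intro t
      rw [he, hE]
      simp only
      rw [← Complex.exp_conj]
      congr 1
      rw [show (2 * Complex.I * (t:ℂ)) = ((2 * t : ℝ) : ℂ) * Complex.I from by push_cast; ring]
      rw [map_mul, Complex.conj_ofReal, Complex.conj_I]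
      push_cast
      ring
    have hconj : ∀ t, (starRingEnd ℂ) (g t) = ∑' n, (a n : ℂ) * E t ^ n := by
      intro t
      rw [hg, ← Complex.star_def, tsum_star]
      apply tsum_congr
      intro n
      rw [star_mul', star_pow]
      rw [show (star ((a n : ℝ) : ℂ)) = ((a n : ℝ):ℂ) from Complex.conj_ofReal _]
      rw [show star (e t) = E t from hconj_e t]
    have hnorm_e : ∀ (t : ℝ) (n : ℕ), ‖(a n : ℂ) * e t ^ n‖ = |a n| := by
      intro t n
      rw [norm_mul, norm_pow, habs_e, one_pow, mul_one,
        Complex.norm_real, Real.norm_eq_abs]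
    have hnorm_E : ∀ (t : ℝ) (n : ℕ), ‖(a n : ℂ) * E t ^ n‖ = |a n| := by
      intro t n
      rw [norm_mul, norm_pow, habs_E, one_pow, mul_one,
        Complex.norm_real, Real.norm_eq_abs]
    set F : ℕ × ℕ → ℝ → ℂ := fun p t => ((a p.1 : ℂ) * e t ^ p.1) * ((a p.2 : ℂ) * E t ^ p.2)
      with hF
    have hprod : ∀ t, g t * (starRingEnd ℂ) (g t) = ∑' p : ℕ × ℕ, F p t := by
      intro t
      rw [hconj t, hg]
      exact tsum_mul_tsum_of_summable_norm
        (by simp only [hnorm_e]; exact ha_sum) (by simp only [hnorm_E]; exact ha_sum)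
    have hcont_e : Continuous e := by
      rw [he]; fun_prop
    have hcont_E : Continuous E := by
      rw [hE]; fun_prop
    have hFcont : ∀ p, Continuous (F p) := by
      intro p
      rw [hF]
      exact (continuous_const.mul (hcont_e.pow _)).mul (continuous_const.mul (hcont_E.pow _))
    have hFnorm : ∀ p t, ‖F p t‖ = |a p.1| * |a p.2| := by
      intro p t
      rw [hF, norm_mul, hnorm_e, hnorm_E]
    have hFint : ∀ p, IntegrableOn (F p) (Set.Ioc 0 Real.pi) := fun p =>
      (hFcont p).integrableOn_Ioc
    have hIntNorm : ∀ p : ℕ × ℕ, ∫ t in Set.Ioc (0:ℝ) Real.pi, ‖F p t‖ =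
        Real.pi * (|a p.1| * |a p.2|) := by
      intro p
      simp only [hFnorm]
      rw [setIntegral_const, smul_eq_mul, measureReal_def, Real.volume_Ioc]
      rw [ENNReal.toReal_ofReal (by rw [sub_zero]; positivity)]
      ring
    have hsum2 : Summable (fun p : ℕ × ℕ => |a p.1| * |a p.2|) :=
      ha_sum.mul_of_nonneg ha_sum (fun _ => abs_nonneg _) (fun _ => abs_nonneg _)
    have hFsum : Summable fun p : ℕ × ℕ => ∫ t in Set.Ioc (0:ℝ) Real.pi, ‖F p t‖ := by
      simp only [hIntNorm]
      exact hsum2.mul_left _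
    have heval : ∀ p : ℕ × ℕ, (∫ t in Set.Ioc (0:ℝ) Real.pi, F p t) =
        if p.1 = p.2 then ((Real.pi * (a p.1 * a p.2) : ℝ) : ℂ) else 0 := by
      rintro ⟨m, n⟩
      rw [← intervalIntegral.integral_of_le Real.pi_pos.le]
      have hFexp : ∀ t : ℝ, F (m, n) t =
          ((a m * a n : ℝ) : ℂ) * Complex.exp ((2*Complex.I*m - 2*Complex.I*n) * t) := by
        intro t
        rw [hF]
        simp only [he, hE]
        rw [← Complex.exp_nat_mul, ← Complex.exp_nat_mul, mul_mul_mul_comm, ← Complex.exp_add]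
        rw [show ((m:ℂ)) * (2 * Complex.I * (t:ℂ)) + (n:ℂ) * -(2 * Complex.I * (t:ℂ))
            = (2 * Complex.I * (m:ℂ) - 2 * Complex.I * (n:ℂ)) * (t:ℂ) from by ring]
        push_cast
        ring
      simp only [hFexp]
      rw [intervalIntegral.integral_const_mul]
      by_cases h : m = n
      · subst h
        simp only [sub_self, zero_mul, Complex.exp_zero, if_pos rfl]
        rw [intervalIntegral.integral_const, sub_zero, Complex.real_smul]
        push_cast
        ring
      · have hmn : ((m:ℂ)) ≠ (n:ℂ) := by exact_mod_cast h
        have hc0' : (2*Complex.I*(m:ℂ) - 2*Complex.I*(n:ℂ)) ≠ 0 := by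
          have h2 : (2*Complex.I*(m:ℂ) - 2*Complex.I*(n:ℂ)) = 2*Complex.I*((m:ℂ) - n) := by ring
          rw [h2]
          exact mul_ne_zero (by simp [Complex.I_ne_zero]) (sub_ne_zero.mpr hmn)
        rw [integral_exp_mul_complex hc0', if_neg h]
        have hpi : (2*Complex.I*(m:ℂ) - 2*Complex.I*(n:ℂ)) * (Real.pi : ℂ) =
            ((((m:ℤ) - (n:ℤ)) : ℤ) : ℂ) * (2 * (Real.pi:ℂ) * Complex.I) := by push_cast; ring
        rw [hpi, Complex.exp_int_mul_two_pi_mul_I, Complex.ofReal_zero, mul_zero, Complex.exp_zero]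
        simp
    -- main computation
    have hv : Summable (fun p : ℕ × ℕ =>
        (if p.1 = p.2 then ((Real.pi * (a p.1 * a p.2) : ℝ) : ℂ) else 0)) := by
      apply Summable.of_norm_bounded (g := fun p : ℕ × ℕ => Real.pi * (|a p.1| * |a p.2|))
        (hsum2.mul_left _)
      rintro ⟨m, n⟩
      by_cases h : m = n
      · simp only [if_pos h]
        rw [Complex.norm_real, Real.norm_eq_abs, abs_mul, abs_mul,
          abs_of_nonneg Real.pi_pos.le]
      · simp only [if_neg h, norm_zero]
        positivity
    have key : (∫ t in (0:ℝ)..Real.pi, g t * (starRingEnd ℂ) (g t)) =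
        ((Real.pi * ∑' n, (a n * a n) : ℝ) : ℂ) := by
      rw [intervalIntegral.integral_of_le Real.pi_pos.le]
      calc ∫ t in Set.Ioc (0:ℝ) Real.pi, g t * (starRingEnd ℂ) (g t)
          = ∫ t in Set.Ioc (0:ℝ) Real.pi, ∑' p : ℕ × ℕ, F p t := by
            apply setIntegral_congr_fun measurableSet_Ioc
            intro t _
            exact hprod t
        _ = ∑' p : ℕ × ℕ, ∫ t in Set.Ioc (0:ℝ) Real.pi, F p t :=
            (integral_tsum_of_summable_integral_norm hFint hFsum).symm
        _ = ∑' p : ℕ × ℕ, (if p.1 = p.2 then ((Real.pi * (a p.1 * a p.2) : ℝ) : ℂ) else 0) :=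
            tsum_congr heval
        _ = ∑' (m : ℕ) (n : ℕ), (if m = n then ((Real.pi * (a m * a n) : ℝ) : ℂ) else 0) :=
            Summable.tsum_prod' hv (fun m => by
              apply summable_of_ne_finset_zero (s := {m})
              intro n hn
              simp only [Finset.mem_singleton] at hn
              rw [if_neg (fun hmn : m = n => hn hmn.symm)])
        _ = ∑' (m : ℕ), ((Real.pi * (a m * a m) : ℝ) : ℂ) := by
            apply tsum_congr
            intro m
            rw [tsum_eq_single m (fun n hn => by rw [if_neg (fun hmn : m = n => hn hmn.symm)])]
            · rw [if_pos rfl]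
        _ = ((Real.pi * ∑' n, (a n * a n) : ℝ) : ℂ) := by
            rw [Complex.ofReal_mul, Complex.ofReal_tsum, ← tsum_mul_left]
            apply tsum_congr
            intro m
            push_cast
            ring
    have hre : ((∫ t in (0:ℝ)..Real.pi, ‖1 - (u:ℂ) * e t‖ : ℝ) : ℂ) =
        ((Real.pi * ∑' n, (a n * a n) : ℝ) : ℂ) := by
      rw [← intervalIntegral.integral_ofReal]
      rw [← key]
      apply intervalIntegral.integral_congr
      intro t _
      exact habs1 t
    exact_mod_cast hre
  rw [hintegral, ← mul_assoc, one_div_mul_cancel Real.pi_ne_zero, one_mul]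
  apply tsum_congr
  intro n
  simp only [ha]
  rw [pow_mul]
  ring
end

section
/- The perimeter of the ellipse x = a cos t, y = b sin t (a ≥ b > 0) equals π(a+b) ∑_{n=0}^∞ (binom(2n,n)/((2n-1)4^n))² x^n, where x = ((a-b)/(a+b))². -/
open intervalIntegral

section EllipseAux

open Finset Complex MeasureTheory

noncomputable def cc : ℕ → ℝ
  | 0 => 1
  | (n+1) => -(catalan n : ℝ) / (2 * 4 ^ n)

lemma cc_zero : cc 0 = 1 := rfl
lemma cc_succ (n : ℕ) : cc (n+1) = -(catalan n : ℝ) / (2 * 4 ^ n) := rfl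

lemma catalan_le (n : ℕ) : (catalan n : ℝ) ≤ 4 ^ n := by
  have h1 : catalan n ≤ Nat.centralBinom n := by
    have h := succ_mul_catalan_eq_centralBinom n
    calc catalan n ≤ (n+1) * catalan n := Nat.le_mul_of_pos_left _ (Nat.succ_pos n)
      _ = Nat.centralBinom n := h
  have h2 : Nat.centralBinom n ≤ 4 ^ n := by
    have h : Nat.centralBinom n ≤ ∑ m ∈ range (2*n + 1), (2*n).choose m :=
      Finset.single_le_sum (f := fun m => (2*n).choose m) (fun _ _ => Nat.zero_le _)
        (by simp [Finset.mem_range]; omega)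
    rw [Nat.sum_range_choose] at h
    calc Nat.centralBinom n ≤ 2 ^ (2*n) := h
      _ = 4 ^ n := by rw [pow_mul]; norm_num
  calc (catalan n : ℝ) ≤ (Nat.centralBinom n : ℝ) := by exact_mod_cast h1
    _ ≤ ((4:ℕ) ^ n : ℝ) := by exact_mod_cast h2
    _ = 4 ^ n := by norm_num

lemma cc_abs_le (n : ℕ) : |cc n| ≤ 1 := by
  cases n with
  | zero => simp [cc_zero]
  | succ n =>
    rw [cc_succ, abs_div, abs_neg, _root_.abs_of_nonneg (by positivity : (0:ℝ) ≤ (catalan n : ℝ)),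
      _root_.abs_of_pos (by positivity : (0:ℝ) < 2 * 4 ^ n)]
    rw [div_le_one (by positivity)]
    calc (catalan n : ℝ) ≤ 4 ^ n := catalan_le n
      _ ≤ 2 * 4 ^ n := by nlinarith [pow_pos (by norm_num : (0:ℝ) < 4) n]

lemma cc_conv (n : ℕ) : ∑ k ∈ range (n+1), cc k * cc (n - k) =
    if n = 0 then 1 else if n = 1 then -1 else 0 := by
  match n with
  | 0 => simp [cc_zero]
  | 1 => norm_num [Finset.sum_range_succ, cc_zero, cc_succ]
  | (m+2) =>
    simp only [if_neg (by omega : ¬ m+2 = 0), if_neg (by omega : ¬ m+2 = 1)]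
    rw [Finset.sum_range_succ, Finset.sum_range_succ']
    have key : (catalan (m+1) : ℝ) =
        ∑ j ∈ range (m+1), (catalan j : ℝ) * (catalan (m - j) : ℝ) := by
      have h := catalan_succ' m
      rw [Finset.Nat.sum_antidiagonal_eq_sum_range_succ
        (fun i j => catalan i * catalan j) m] at h
      rw [h]
      push_cast
      rfl
    have hterm : ∀ j ∈ range (m+1), cc (j+1) * cc (m+2 - (j+1)) =
        (catalan j : ℝ) * (catalan (m - j) : ℝ) / (4 * 4 ^ m) := by
      intro j hj
      rw [Finset.mem_range] at hj
      have e : m + 2 - (j+1) = (m - j) + 1 := by omega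
      rw [e, cc_succ, cc_succ, div_mul_div_comm, neg_mul_neg]
      congr 1
      have h4 : (4:ℝ) ^ j * 4 ^ (m - j) = 4 ^ m := by
        rw [← pow_add]; congr 1; omega
      nlinarith [h4]
    rw [Finset.sum_congr rfl hterm, ← Finset.sum_div, ← key]
    have hc : cc (m+2) = -(catalan (m+1) : ℝ) / (2 * (4 * 4 ^ m)) := by
      rw [cc_succ, pow_succ]; ring_nf
    simp only [Nat.sub_zero, Nat.sub_self, hc, cc_zero]
    have hp : (0:ℝ) < 4 ^ m := by positivity
    field_simp
    ring

section core
variable {r : ℝ} (hr0 : 0 ≤ r) (hr1 : r < 1)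

lemma znorm (u : ℝ) (hr0 : 0 ≤ r) : ‖(r:ℂ) * Complex.exp (u * Complex.I)‖ = r := by
  rw [norm_mul, Complex.norm_real, Real.norm_eq_abs,
    Complex.norm_exp_ofReal_mul_I, _root_.abs_of_nonneg hr0, mul_one]

include hr0 hr1 in
lemma hsum (u : ℝ) : Summable (fun n => ‖(cc n : ℂ) * ((r:ℂ) * Complex.exp (u * Complex.I))^n‖) := by
  apply Summable.of_nonneg_of_le (fun n => norm_nonneg _) (fun n => ?_)
    (summable_geometric_of_lt_one hr0 hr1)
  rw [norm_mul, norm_pow, znorm u hr0, Complex.norm_real, Real.norm_eq_abs]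
  exact mul_le_of_le_one_left (pow_nonneg hr0 n) (cc_abs_le n)

include hr0 hr1 in
lemma g_sq (u : ℝ) :
    (∑' n : ℕ, (cc n : ℂ) * ((r:ℂ) * Complex.exp (u * Complex.I))^n)^2
      = 1 - (r:ℂ) * Complex.exp (u * Complex.I) := by
  set z : ℂ := (r:ℂ) * Complex.exp (u * Complex.I) with hz
  rw [sq, tsum_mul_tsum_eq_tsum_sum_antidiagonal_of_summable_norm (hsum hr0 hr1 u) (hsum hr0 hr1 u)]
  have h1 : ∀ n : ℕ, (∑ kl ∈ Finset.HasAntidiagonal.antidiagonal n,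
      ((cc kl.1 : ℂ) * z ^ kl.1) * ((cc kl.2 : ℂ) * z ^ kl.2))
      = ((if n = 0 then 1 else if n = 1 then -1 else 0 : ℝ) : ℂ) * z ^ n := by
    intro n
    rw [Finset.Nat.sum_antidiagonal_eq_sum_range_succ
      (f := fun i j => ((cc i : ℂ) * z ^ i) * ((cc j : ℂ) * z ^ j))]
    have h2 : ∀ k ∈ Finset.range (n+1), ((cc k : ℂ) * z ^ k) * ((cc (n-k) : ℂ) * z ^ (n-k))
        = ((cc k * cc (n-k) : ℝ) : ℂ) * z ^ n := by
      intro k hk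
      rw [Finset.mem_range] at hk
      push_cast
      rw [mul_mul_mul_comm, ← pow_add]
      congr 2
      omega
    rw [Finset.sum_congr rfl h2, ← Finset.sum_mul, ← Complex.ofReal_sum, cc_conv]
  rw [tsum_congr h1, tsum_eq_sum (s := ({0, 1} : Finset ℕ))
    (by intro n hn; simp only [Finset.mem_insert, Finset.mem_singleton] at hn
        push_neg at hn
        rw [if_neg hn.1, if_neg hn.2]; simp)]
  norm_num
  ring

include hr0 hr1 in
lemma key_integral :
    (∫ u in (0:ℝ)..(2*Real.pi), ‖1 - (r:ℂ) * Complex.exp (u * Complex.I)‖)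
      = 2 * Real.pi * ∑' n : ℕ, (cc n)^2 * (r^2)^n := by
  have hpi : (0:ℝ) < 2*Real.pi := by positivity
  set z : ℝ → ℂ := fun u => (r:ℂ) * Complex.exp (u * Complex.I) with hz
  set H : ℕ × ℕ → ℝ → ℂ := fun p u =>
    ((cc p.1 : ℂ) * z u ^ p.1) * (starRingEnd ℂ) ((cc p.2 : ℂ) * z u ^ p.2) with hH
  -- pointwise expansion in a double series
  have hnorm : ∀ u : ℝ, ((‖1 - z u‖ : ℝ) : ℂ) = ∑' p : ℕ × ℕ, H p u := by
    intro u
    have h1 : ((‖1 - z u‖ : ℝ) : ℂ) =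
        (∑' n : ℕ, (cc n : ℂ) * z u ^ n) *
          (starRingEnd ℂ) (∑' n : ℕ, (cc n : ℂ) * z u ^ n) := by
      rw [Complex.mul_conj]
      congr 1
      rw [Complex.normSq_eq_norm_sq, ← norm_pow, g_sq hr0 hr1 u]
    rw [h1]
    have h2 : (starRingEnd ℂ) (∑' n : ℕ, (cc n : ℂ) * z u ^ n)
        = ∑' n : ℕ, (starRingEnd ℂ) ((cc n : ℂ) * z u ^ n) := by
      simp only [starRingEnd_apply]
      exact tsum_star
    rw [h2]
    exact tsum_mul_tsum_of_summable_norm (hsum hr0 hr1 u)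
      (by simpa only [starRingEnd_apply, norm_star] using hsum hr0 hr1 u)
  -- explicit form of the (m, n) term
  have hzc : ∀ u : ℝ, (starRingEnd ℂ) (z u) = (r:ℂ) * Complex.exp (-((u:ℂ) * Complex.I)) := by
    intro u
    simp only [hz, map_mul, Complex.conj_ofReal, ← Complex.exp_conj]
    congr 2
    simp [Complex.conj_I]
  have hHeq : ∀ (p : ℕ × ℕ) (u : ℝ), H p u =
      ((cc p.1 * cc p.2 * (r ^ p.1 * r ^ p.2) : ℝ) : ℂ)
        * Complex.exp ((((p.1 : ℂ) - (p.2 : ℂ)) * Complex.I) * (u:ℂ)) := by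
    intro p u
    simp only [hH, map_mul, map_pow, hzc, Complex.conj_ofReal]
    rw [hz]
    simp only []
    rw [mul_pow, mul_pow, ← Complex.exp_nat_mul, ← Complex.exp_nat_mul]
    have hexp : Complex.exp ((p.1:ℂ) * ((u:ℂ) * Complex.I))
        * Complex.exp ((p.2:ℂ) * (-((u:ℂ) * Complex.I)))
        = Complex.exp ((((p.1 : ℂ) - (p.2 : ℂ)) * Complex.I) * (u:ℂ)) := by
      rw [← Complex.exp_add]; congr 1; ring
    push_cast
    linear_combination
      ((cc p.1 : ℂ) * (cc p.2 : ℂ) * (r:ℂ)^p.1 * (r:ℂ)^p.2) * hexp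
  -- continuity and integrability
  have hzcont : Continuous z :=
    continuous_const.mul (Complex.continuous_exp.comp
      (Complex.continuous_ofReal.mul continuous_const))
  have hHcont : ∀ p : ℕ × ℕ, Continuous (H p) := by
    intro p
    apply Continuous.mul
    · exact continuous_const.mul (hzcont.pow _)
    · exact Complex.continuous_conj.comp (continuous_const.mul (hzcont.pow _))
  have hIntgr : ∀ p : ℕ × ℕ, IntegrableOn (H p) (Set.Ioc (0:ℝ) (2*Real.pi)) :=
    fun p => (hHcont p).integrableOn_Ioc
  -- norms
  have hHnorm : ∀ (p : ℕ × ℕ) (u : ℝ), ‖H p u‖ =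
      (|cc p.1| * r ^ p.1) * (|cc p.2| * r ^ p.2) := by
    intro p u
    simp only [hH, starRingEnd_apply, norm_mul, norm_star, norm_pow, hz]
    simp only [Complex.norm_real, Real.norm_eq_abs, Complex.norm_exp_ofReal_mul_I,
      mul_one, _root_.abs_of_nonneg hr0]
  have hsa : Summable (fun n : ℕ => |cc n| * r ^ n) := by
    apply Summable.of_nonneg_of_le (fun n => by positivity)
      (fun n => mul_le_of_le_one_left (pow_nonneg hr0 n) (cc_abs_le n))
      (summable_geometric_of_lt_one hr0 hr1)
  have hIntNorm : ∀ p : ℕ × ℕ, (∫ u in Set.Ioc (0:ℝ) (2*Real.pi), ‖H p u‖) =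
      (2*Real.pi) * ((|cc p.1| * r ^ p.1) * (|cc p.2| * r ^ p.2)) := by
    intro p
    simp only [hHnorm]
    rw [MeasureTheory.setIntegral_const, Real.volume_real_Ioc_of_le hpi.le, smul_eq_mul]
    ring
  have hSumInt : Summable (fun p : ℕ × ℕ =>
      ∫ u in Set.Ioc (0:ℝ) (2*Real.pi), ‖H p u‖) := by
    simp only [hIntNorm]
    exact (hsa.mul_of_nonneg hsa (fun n => by positivity)
      (fun n => by positivity)).mul_left _
  -- the individual integrals
  have hHint : ∀ p : ℕ × ℕ, (∫ u in Set.Ioc (0:ℝ) (2*Real.pi), H p u) =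
      (if p.2 = p.1 then (cc p.1 : ℂ)^2 * ((r:ℂ)^2)^p.1 * ((2*Real.pi : ℝ) : ℂ)
        else 0) := by
    intro p
    rw [← intervalIntegral.integral_of_le hpi.le]
    rw [intervalIntegral.integral_congr (g := fun u : ℝ =>
      ((cc p.1 * cc p.2 * (r ^ p.1 * r ^ p.2) : ℝ) : ℂ)
        * Complex.exp ((((p.1 : ℂ) - (p.2 : ℂ)) * Complex.I) * (u:ℂ)))
      (fun u _ => hHeq p u)]
    rw [intervalIntegral.integral_const_mul]
    by_cases hpq : p.2 = p.1
    · rw [if_pos hpq]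
      have h0 : ((p.1:ℂ) - (p.2:ℂ)) = 0 := by rw [hpq]; ring
      simp only [h0, zero_mul, Complex.exp_zero]
      rw [intervalIntegral.integral_const]
      rw [hpq]
      push_cast
      ring_nf
      simp [smul_eq_mul]
      ring
    · rw [if_neg hpq]
      have hc : ((p.1:ℂ) - (p.2:ℂ)) * Complex.I ≠ 0 := by
        apply mul_ne_zero _ Complex.I_ne_zero
        rw [sub_ne_zero]
        exact_mod_cast fun h => hpq (by exact_mod_cast h.symm)
      rw [integral_exp_mul_complex hc]
      have h1 : Complex.exp (((p.1:ℂ) - (p.2:ℂ)) * Complex.I * ((2*Real.pi : ℝ):ℂ)) = 1 := by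
        have h2 := Complex.exp_int_mul_two_pi_mul_I ((p.1:ℤ) - (p.2:ℤ))
        rw [← h2]
        congr 1
        push_cast
        ring
      rw [h1]
      simp
  -- put everything together
  have hS1 : Summable (fun p : ℕ × ℕ => ∫ u in Set.Ioc (0:ℝ) (2*Real.pi), H p u) :=
    (MeasureTheory.hasSum_integral_of_summable_integral_norm hIntgr hSumInt).summable
  have hS2 : Summable (fun p : ℕ × ℕ =>
      if p.2 = p.1 then (cc p.1 : ℂ)^2 * ((r:ℂ)^2)^p.1 * ((2*Real.pi : ℝ) : ℂ) else 0) :=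
    hS1.congr hHint
  have main : ((∫ u in (0:ℝ)..(2*Real.pi), ‖1 - z u‖ : ℝ) : ℂ) =
      ∑' p : ℕ × ℕ, ∫ u in Set.Ioc (0:ℝ) (2*Real.pi), H p u := by
    rw [← intervalIntegral.integral_ofReal]
    rw [intervalIntegral.integral_congr (g := fun u : ℝ => ∑' p : ℕ × ℕ, H p u)
      (fun u _ => hnorm u)]
    rw [intervalIntegral.integral_of_le hpi.le]
    exact (MeasureTheory.integral_tsum_of_summable_integral_norm hIntgr hSumInt).symm
  have final : (∑' p : ℕ × ℕ, ∫ u in Set.Ioc (0:ℝ) (2*Real.pi), H p u) =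
      ((2 * Real.pi * ∑' n : ℕ, (cc n)^2 * (r^2)^n : ℝ) : ℂ) := by
    rw [tsum_congr hHint]
    rw [Summable.tsum_prod' hS2 (fun m => by
      apply (hasSum_ite_eq m ((cc m : ℂ)^2 * ((r:ℂ)^2)^m * ((2*Real.pi : ℝ) : ℂ))).summable)]
    have hinner : ∀ m : ℕ, (∑' n : ℕ,
        if n = m then (cc m : ℂ)^2 * ((r:ℂ)^2)^m * ((2*Real.pi : ℝ) : ℂ) else 0)
        = (cc m : ℂ)^2 * ((r:ℂ)^2)^m * ((2*Real.pi : ℝ) : ℂ) :=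
      fun m => tsum_ite_eq m _
    rw [tsum_congr hinner]
    rw [show ((2 * Real.pi * ∑' n : ℕ, (cc n)^2 * (r^2)^n : ℝ) : ℂ)
        = ((2*Real.pi : ℝ) : ℂ) * ∑' n : ℕ, (((cc n)^2 * (r^2)^n : ℝ) : ℂ) by
      rw [Complex.ofReal_mul, Complex.ofReal_tsum]]
    rw [← tsum_mul_left]
    exact tsum_congr (fun n => by push_cast; ring)
  apply Complex.ofReal_injective
  rw [main, final]

end core

lemma centralBinom_succ_eq (n : ℕ) : Nat.centralBinom (n+1) = 2 * (2*n+1) * catalan n := by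
  have h1 := Nat.succ_mul_centralBinom_succ n
  have h2 := succ_mul_catalan_eq_centralBinom n
  have h3 : (n+1) * Nat.centralBinom (n+1) = (n+1) * (2 * (2*n+1) * catalan n) := by
    rw [h1, ← h2]; ring
  exact Nat.eq_of_mul_eq_mul_left (Nat.succ_pos n) h3

lemma cc_sq (n : ℕ) :
    (cc n)^2 = ((Nat.choose (2*n) n : ℝ) / ((2*(n:ℝ) - 1) * 4 ^ n))^2 := by
  cases n with
  | zero => norm_num [cc]
  | succ n =>
    have h : ((2*(n+1)).choose (n+1) : ℝ) = 2 * (2*(n:ℝ)+1) * catalan n := by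
      have h1 := centralBinom_succ_eq n
      have h2 : Nat.centralBinom (n+1) = (2*(n+1)).choose (n+1) := rfl
      rw [h2] at h1
      rw [h1]; push_cast; ring
    show (-(catalan n : ℝ) / (2 * 4 ^ n))^2 = _
    rw [h]
    have h4 : (0:ℝ) < 4 ^ n := by positivity
    have h5 : (2*((n:ℝ)+1) - 1) = 2*(n:ℝ)+1 := by ring
    have h6 : (0:ℝ) < 2*(n:ℝ)+1 := by positivity
    push_cast
    rw [h5]
    rw [div_pow, div_pow]
    rw [show (4:ℝ) ^ (n+1) = 4 * 4^n by ring]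
    field_simp
    ring

end EllipseAux

/-- The perimeter of the ellipse `x = a cos t`, `y = b sin t` (`a ≥ b > 0`) equals
`π(a+b) ∑ (binom(2n,n)/((2n-1)4^n))² xⁿ` with `x = ((a-b)/(a+b))²`. -/
theorem stmt_6 (a b : ℝ) (hb : 0 < b) (hab : b ≤ a) :
    (∫ t in (0:ℝ)..(2 * Real.pi),
        Real.sqrt (a ^ 2 * Real.sin t ^ 2 + b ^ 2 * Real.cos t ^ 2)) =
      Real.pi * (a + b) *
        ∑' n : ℕ, ((Nat.choose (2 * n) n : ℝ) / ((2 * (n : ℝ) - 1) * 4 ^ n)) ^ 2 *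
          (((a - b) / (a + b)) ^ 2) ^ n := by
  have hab2 : (0:ℝ) < a + b := by linarith
  set r : ℝ := (a - b) / (a + b) with hrdef
  have hr0 : 0 ≤ r := div_nonneg (by linarith) hab2.le
  have hr1 : r < 1 := by rw [hrdef, div_lt_one hab2]; linarith
  set s : ℝ := (a + b) / 2 with hsdef
  have hs0 : 0 < s := by positivity
  set F : ℝ → ℝ := fun u => ‖1 - (r:ℂ) * Complex.exp ((u:ℝ) * Complex.I)‖ with hF
  -- pointwise identity
  have hpt : ∀ t : ℝ, Real.sqrt (a ^ 2 * Real.sin t ^ 2 + b ^ 2 * Real.cos t ^ 2)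
      = s * F (2 * t) := by
    intro t
    have h2 : Complex.normSq (1 - (r:ℂ) * Complex.exp (((2*t : ℝ)) * Complex.I))
        = 1 - 2*r*Real.cos (2*t) + r^2 := by
      rw [Complex.normSq_apply]
      simp only [Complex.sub_re, Complex.sub_im, Complex.one_re, Complex.one_im,
        Complex.mul_re, Complex.mul_im, Complex.ofReal_re, Complex.ofReal_im,
        Complex.exp_ofReal_mul_I_re, Complex.exp_ofReal_mul_I_im]
      have := Real.sin_sq_add_cos_sq (2*t)
      nlinarith [this]
    have h1 : F (2*t) = Real.sqrt (1 - 2*r*Real.cos (2*t) + r^2) := by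
      rw [hF]
      simp only []
      rw [Complex.norm_def, h2]
    rw [h1, ← Real.sqrt_sq hs0.le, ← Real.sqrt_mul (by positivity)]
    congr 1
    have hcos : Real.cos (2*t) = 1 - 2 * Real.sin t ^ 2 := by
      rw [Real.cos_two_mul]
      have := Real.sin_sq_add_cos_sq t
      nlinarith [this]
    have hs1 := Real.sin_sq_add_cos_sq t
    rw [hcos, hsdef, hrdef]
    field_simp
    linear_combination (4*b^2) * hs1
  -- continuity of F
  have hFc : Continuous F := by
    apply Continuous.norm
    exact continuous_const.sub (continuous_const.mul (Complex.continuous_exp.comp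
      (Complex.continuous_ofReal.mul continuous_const)))
  -- periodicity
  have hper : Function.Periodic F (2 * Real.pi) := by
    intro u
    rw [hF]
    simp only []
    congr 3
    push_cast
    rw [add_mul, Complex.exp_add]
    rw [show ((2:ℂ) * (Real.pi:ℂ)) * Complex.I = 2 * Real.pi * Complex.I by ring]
    rw [Complex.exp_two_pi_mul_I, mul_one]
  -- substitution u = 2t
  have hsub : (∫ t in (0:ℝ)..(2*Real.pi), F (2 * t))
      = (2:ℝ)⁻¹ • ∫ u in (0:ℝ)..(4*Real.pi), F u := by
    rw [intervalIntegral.integral_comp_mul_left F (two_ne_zero)]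
    norm_num
    ring_nf
  -- periodic doubling
  have hdouble : (∫ u in (0:ℝ)..(4*Real.pi), F u) = 2 * ∫ u in (0:ℝ)..(2*Real.pi), F u := by
    have hadj : (∫ u in (0:ℝ)..(2*Real.pi), F u) + (∫ u in (2*Real.pi)..(4*Real.pi), F u)
        = ∫ u in (0:ℝ)..(4*Real.pi), F u :=
      intervalIntegral.integral_add_adjacent_intervals
        (hFc.intervalIntegrable _ _) (hFc.intervalIntegrable _ _)
    have hper2 : (∫ u in (2*Real.pi)..(4*Real.pi), F u) = ∫ u in (0:ℝ)..(2*Real.pi), F u := by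
      have h := hper.intervalIntegral_add_eq (2*Real.pi) 0
      rw [zero_add] at h
      rw [show (4:ℝ)*Real.pi = 2*Real.pi + 2*Real.pi by ring]
      exact h
    rw [← hadj, hper2]
    ring
  calc (∫ t in (0:ℝ)..(2 * Real.pi),
        Real.sqrt (a ^ 2 * Real.sin t ^ 2 + b ^ 2 * Real.cos t ^ 2))
      = ∫ t in (0:ℝ)..(2 * Real.pi), s * F (2 * t) := by
        apply intervalIntegral.integral_congr
        intro t _
        exact hpt t
    _ = s * ∫ t in (0:ℝ)..(2 * Real.pi), F (2 * t) := intervalIntegral.integral_const_mul _ _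
    _ = s * ((2:ℝ)⁻¹ • ∫ u in (0:ℝ)..(4*Real.pi), F u) := by rw [hsub]
    _ = s * ∫ u in (0:ℝ)..(2*Real.pi), F u := by rw [hdouble, smul_eq_mul]; ring
    _ = s * (2 * Real.pi * ∑' n : ℕ, (cc n)^2 * (r^2)^n) := by
        rw [key_integral hr0 hr1]
    _ = Real.pi * (a + b) *
        ∑' n : ℕ, ((Nat.choose (2 * n) n : ℝ) / ((2 * (n : ℝ) - 1) * 4 ^ n)) ^ 2
          * (((a - b) / (a + b)) ^ 2) ^ n := by
        rw [tsum_congr (fun n => by rw [cc_sq n] :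
          ∀ n : ℕ, (cc n)^2 * (r^2)^n
            = ((Nat.choose (2 * n) n : ℝ) / ((2 * (n : ℝ) - 1) * 4 ^ n)) ^ 2 * (r^2)^n)]
        rw [hsdef]
        ring
end

section
/- The Maclaurin expansion of R₂(x) = 1 + 3x/(10 + √(4 - 3x)) agrees with E(x) = ∑ (binom(2n,n)/((2n-1)4^n))² x^n in the coefficients of x⁰ through x⁴; the first disagreement is at x⁵, where R₂ has coefficient 95/131072 while E has coefficient 49/65536 = 98/131072. -/
open Real Filter Topology

noncomputable def SR (x : ℝ) : ℝ := Real.sqrt (4 - 3 * x)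

noncomputable def RG0 (x : ℝ) : ℝ := (14 + SR x - SR x ^ 2) / (10 + SR x)
noncomputable def RG1 (x : ℝ) : ℝ :=
  (12 + 60 * SR x + 3 * SR x ^ 2) / (2 * SR x * (10 + SR x) ^ 2)
noncomputable def RG2 (x : ℝ) : ℝ :=
  (360 + 108 * SR x + 270 * SR x ^ 2 + 9 * SR x ^ 3) / (4 * SR x ^ 3 * (10 + SR x) ^ 3)
noncomputable def RG3 (x : ℝ) : ℝ :=
  (32400 + 12960 * SR x + 9720 * SR x ^ 2 + 3240 * SR x ^ 3 + 81 * SR x ^ 4) /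
    (8 * SR x ^ 5 * (10 + SR x) ^ 4)
noncomputable def RG4 (x : ℝ) : ℝ :=
  (4860000 + 2430000 * SR x + 1185840 * SR x ^ 2 + 398520 * SR x ^ 3 + 60750 * SR x ^ 4 +
      1215 * SR x ^ 5) / (16 * SR x ^ 7 * (10 + SR x) ^ 5)
noncomputable def RG5 (x : ℝ) : ℝ :=
  (1020600000 + 612360000 * SR x + 258066000 * SR x ^ 2 + 83397600 * SR x ^ 3 +
      16227540 * SR x ^ 4 + 1530900 * SR x ^ 5 + 25515 * SR x ^ 6) /
    (32 * SR x ^ 9 * (10 + SR x) ^ 6)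

lemma SR_pos {x : ℝ} (hx : x ∈ Set.Ioo (-1 : ℝ) 1) : 0 < SR x := by
  have : (0:ℝ) < 4 - 3 * x := by nlinarith [hx.2]
  exact Real.sqrt_pos.mpr this

lemma SR_sq {x : ℝ} (hx : x ∈ Set.Ioo (-1 : ℝ) 1) : SR x ^ 2 = 4 - 3 * x := by
  have : (0:ℝ) ≤ 4 - 3 * x := by nlinarith [hx.2]
  exact Real.sq_sqrt this

lemma SR_hasDerivAt {x : ℝ} (hx : x ∈ Set.Ioo (-1 : ℝ) 1) :
    HasDerivAt SR (-3 / (2 * SR x)) x := by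
  have h4 : (0:ℝ) < 4 - 3 * x := by nlinarith [hx.2]
  have hin : HasDerivAt (fun y : ℝ => 4 - 3 * y) (-3) x := by
    simpa using ((hasDerivAt_id x).const_mul (3:ℝ)).const_sub 4
  have := hin.sqrt (ne_of_gt h4)
  show HasDerivAt (fun y => Real.sqrt (4 - 3 * y)) (-3 / (2 * Real.sqrt (4 - 3 * x))) x
  simpa [neg_div] using this

lemma step0 {x : ℝ} (hx : x ∈ Set.Ioo (-1 : ℝ) 1) : HasDerivAt RG0 (RG1 x) x := by
  have hs := SR_pos hx
  have hd := SR_hasDerivAt hx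
  have hs0 : SR x ≠ 0 := ne_of_gt hs
  have h10 : 10 + SR x ≠ 0 := by positivity
  have hnum := ((hasDerivAt_const x (14:ℝ)).add hd).sub (hd.pow 2)
  have hden := (hasDerivAt_const x (10:ℝ)).add hd
  have h := hnum.div hden (by simpa using h10)
  refine h.congr_deriv ?_
  simp only [RG1]
  simp only [Pi.add_apply, Pi.sub_apply, Pi.mul_apply, Pi.pow_apply, Pi.div_apply,
    Nat.cast_ofNat]
  field_simp
  ring

lemma step1 {x : ℝ} (hx : x ∈ Set.Ioo (-1 : ℝ) 1) : HasDerivAt RG1 (RG2 x) x := by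
  have hs := SR_pos hx
  have hd := SR_hasDerivAt hx
  have hs0 : SR x ≠ 0 := ne_of_gt hs
  have h10p : (0:ℝ) < 10 + SR x := by linarith
  have h10 : 10 + SR x ≠ 0 := ne_of_gt h10p
  have hnum := ((hasDerivAt_const x (12:ℝ)).add (hd.const_mul 60)).add ((hd.pow 2).const_mul 3)
  have hden := (hd.const_mul 2).mul (((hasDerivAt_const x (10:ℝ)).add hd).pow 2)
  have hne : 2 * SR x * (10 + SR x) ^ 2 ≠ 0 :=
    ne_of_gt (mul_pos (mul_pos two_pos hs) (pow_pos h10p 2))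
  have h := hnum.div hden (by simpa using hne)
  refine h.congr_deriv ?_
  simp only [RG2]
  simp only [Pi.add_apply, Pi.sub_apply, Pi.mul_apply, Pi.pow_apply, Pi.div_apply,
    Nat.cast_ofNat]
  field_simp
  ring

lemma step2 {x : ℝ} (hx : x ∈ Set.Ioo (-1 : ℝ) 1) : HasDerivAt RG2 (RG3 x) x := by
  have hs := SR_pos hx
  have hd := SR_hasDerivAt hx
  have hs0 : SR x ≠ 0 := ne_of_gt hs
  have h10p : (0:ℝ) < 10 + SR x := by linarith
  have h10 : 10 + SR x ≠ 0 := ne_of_gt h10p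
  have hnum := (((hasDerivAt_const x (360:ℝ)).add (hd.const_mul 108)).add
      ((hd.pow 2).const_mul 270)).add ((hd.pow 3).const_mul 9)
  have hden := ((hd.pow 3).const_mul 4).mul (((hasDerivAt_const x (10:ℝ)).add hd).pow 3)
  have hne : 4 * SR x ^ 3 * (10 + SR x) ^ 3 ≠ 0 :=
    ne_of_gt (mul_pos (mul_pos (by norm_num) (pow_pos hs 3)) (pow_pos h10p 3))
  have h := hnum.div hden (by simpa using hne)
  refine h.congr_deriv ?_
  simp only [RG3]
  simp only [Pi.add_apply, Pi.sub_apply, Pi.mul_apply, Pi.pow_apply, Pi.div_apply,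
    Nat.cast_ofNat]
  field_simp
  ring

lemma step3 {x : ℝ} (hx : x ∈ Set.Ioo (-1 : ℝ) 1) : HasDerivAt RG3 (RG4 x) x := by
  have hs := SR_pos hx
  have hd := SR_hasDerivAt hx
  have hs0 : SR x ≠ 0 := ne_of_gt hs
  have h10p : (0:ℝ) < 10 + SR x := by linarith
  have h10 : 10 + SR x ≠ 0 := ne_of_gt h10p
  have hnum := ((((hasDerivAt_const x (32400:ℝ)).add (hd.const_mul 12960)).add
      ((hd.pow 2).const_mul 9720)).add ((hd.pow 3).const_mul 3240)).add
      ((hd.pow 4).const_mul 81)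
  have hden := ((hd.pow 5).const_mul 8).mul (((hasDerivAt_const x (10:ℝ)).add hd).pow 4)
  have hne : 8 * SR x ^ 5 * (10 + SR x) ^ 4 ≠ 0 :=
    ne_of_gt (mul_pos (mul_pos (by norm_num) (pow_pos hs 5)) (pow_pos h10p 4))
  have h := hnum.div hden (by simpa using hne)
  refine h.congr_deriv ?_
  simp only [RG4]
  simp only [Pi.add_apply, Pi.sub_apply, Pi.mul_apply, Pi.pow_apply, Pi.div_apply,
    Nat.cast_ofNat]
  field_simp
  ring

lemma step4 {x : ℝ} (hx : x ∈ Set.Ioo (-1 : ℝ) 1) : HasDerivAt RG4 (RG5 x) x := by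
  have hs := SR_pos hx
  have hd := SR_hasDerivAt hx
  have hs0 : SR x ≠ 0 := ne_of_gt hs
  have h10p : (0:ℝ) < 10 + SR x := by linarith
  have h10 : 10 + SR x ≠ 0 := ne_of_gt h10p
  have hnum := (((((hasDerivAt_const x (4860000:ℝ)).add (hd.const_mul 2430000)).add
      ((hd.pow 2).const_mul 1185840)).add ((hd.pow 3).const_mul 398520)).add
      ((hd.pow 4).const_mul 60750)).add ((hd.pow 5).const_mul 1215)
  have hden := ((hd.pow 7).const_mul 16).mul (((hasDerivAt_const x (10:ℝ)).add hd).pow 5)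
  have hne : 16 * SR x ^ 7 * (10 + SR x) ^ 5 ≠ 0 :=
    ne_of_gt (mul_pos (mul_pos (by norm_num) (pow_pos hs 7)) (pow_pos h10p 5))
  have h := hnum.div hden (by simpa using hne)
  refine h.congr_deriv ?_
  simp only [RG5]
  simp only [Pi.add_apply, Pi.sub_apply, Pi.mul_apply, Pi.pow_apply, Pi.div_apply,
    Nat.cast_ofNat]
  field_simp
  ring

lemma Ioo_mem : Set.Ioo (-1 : ℝ) 1 ∈ 𝓝 (0 : ℝ) :=
  Ioo_mem_nhds (by norm_num) (by norm_num)

lemma chain (F G : ℝ → ℝ) (h : ∀ x ∈ Set.Ioo (-1 : ℝ) 1, HasDerivAt F (G x) x) (m : ℕ) :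
    iteratedDeriv (m + 1) F 0 = iteratedDeriv m G 0 := by
  rw [iteratedDeriv_succ']
  exact Filter.EventuallyEq.iteratedDeriv_eq m
    (Filter.eventuallyEq_of_mem Ioo_mem fun x hx => (h x hx).deriv)

lemma f_eq : (fun x : ℝ => 1 + 3 * x / (10 + Real.sqrt (4 - 3 * x))) =ᶠ[𝓝 0] RG0 := by
  refine Filter.eventuallyEq_of_mem Ioo_mem fun x hx => ?_
  have hs := SR_pos hx
  have h10 : 10 + SR x ≠ 0 := by positivity
  have hsq := SR_sq hx
  simp only [RG0]
  rw [show Real.sqrt (4 - 3 * x) = SR x from rfl]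
  field_simp
  nlinarith [hsq]

lemma SR_zero : SR 0 = 2 := by
  rw [SR, show (4:ℝ) - 3 * 0 = 2 ^ 2 by norm_num, Real.sqrt_sq (by norm_num)]

lemma iter_f (n : ℕ) (hn : n ≤ 5) :
    iteratedDeriv n (fun x : ℝ => 1 + 3 * x / (10 + Real.sqrt (4 - 3 * x))) 0 =
      [RG0 0, RG1 0, RG2 0, RG3 0, RG4 0, RG5 0].get ⟨n, by simp only [List.length]; omega⟩ := by
  rw [f_eq.iteratedDeriv_eq n]
  interval_cases n
  · simp [iteratedDeriv_zero]
  · rw [chain RG0 RG1 (fun x hx => step0 hx) 0, iteratedDeriv_zero]; rfl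
  · rw [chain RG0 RG1 (fun x hx => step0 hx) 1, chain RG1 RG2 (fun x hx => step1 hx) 0,
      iteratedDeriv_zero]; rfl
  · rw [chain RG0 RG1 (fun x hx => step0 hx) 2, chain RG1 RG2 (fun x hx => step1 hx) 1,
      chain RG2 RG3 (fun x hx => step2 hx) 0, iteratedDeriv_zero]; rfl
  · rw [chain RG0 RG1 (fun x hx => step0 hx) 3, chain RG1 RG2 (fun x hx => step1 hx) 2,
      chain RG2 RG3 (fun x hx => step2 hx) 1, chain RG3 RG4 (fun x hx => step3 hx) 0,
      iteratedDeriv_zero]; rfl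
  · rw [chain RG0 RG1 (fun x hx => step0 hx) 4, chain RG1 RG2 (fun x hx => step1 hx) 3,
      chain RG2 RG3 (fun x hx => step2 hx) 2, chain RG3 RG4 (fun x hx => step3 hx) 1,
      chain RG4 RG5 (fun x hx => step4 hx) 0, iteratedDeriv_zero]; rfl

/-- The Maclaurin expansion of `R₂(x) = 1 + 3x/(10 + √(4-3x))` agrees with
`E(x) = ∑ (binom(2n,n)/((2n-1)4^n))² xⁿ` in the coefficients of `x⁰` through `x⁴`;
at `x⁵`, `R₂` has coefficient `95/131072` while `E` has `49/65536 = 98/131072`. -/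
theorem stmt_11 :
    (∀ n : ℕ, n ≤ 4 →
      iteratedDeriv n (fun x : ℝ => 1 + 3 * x / (10 + Real.sqrt (4 - 3 * x))) 0
          / n.factorial =
        ((Nat.choose (2 * n) n : ℝ) / ((2 * (n : ℝ) - 1) * 4 ^ n)) ^ 2) ∧
    iteratedDeriv 5 (fun x : ℝ => 1 + 3 * x / (10 + Real.sqrt (4 - 3 * x))) 0
        / (Nat.factorial 5) = 95/131072 ∧
    ((Nat.choose 10 5 : ℝ) / ((2 * (5 : ℝ) - 1) * 4 ^ 5)) ^ 2 = 49/65536 ∧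
    (49 : ℝ)/65536 = 98/131072 := by
  refine ⟨fun n hn => ?_, ?_, by norm_num [Nat.choose], by norm_num⟩
  · interval_cases n <;>
      rw [iter_f _ (by norm_num)] <;>
      simp only [List.get, RG0, RG1, RG2, RG3, RG4, SR_zero] <;>
      norm_num [Nat.choose, Nat.factorial]
  · rw [iter_f 5 (by norm_num)]
    simp only [List.get, RG5, SR_zero]
    norm_num [Nat.factorial]
end

section
/- The Maclaurin expansion of A₁(x) = 1 + 192x/(640 + √(16384 - 12288x - 18x⁴)) agrees with E(x) = ∑ (binom(2n,n)/((2n-1)4^n))² x^n in the coefficients of x⁰ through x⁵. -/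
open Polynomial Filter Topology

set_option maxHeartbeats 2000000

noncomputable section

def Rpol : ℝ[X] := 16384 - 12288 * X - 18 * X ^ 4
def Dpol : ℝ[X] := 393216 + 12288 * X + 18 * X ^ 4

def gg (P Q : ℝ[X]) (c m b : ℕ) (x : ℝ) : ℝ :=
  (P.eval x + Q.eval x * Real.sqrt (Rpol.eval x)) /
    (2 ^ c * Rpol.eval x ^ m * Dpol.eval x ^ b)

def hatP (P : ℝ[X]) (m b : ℕ) : ℝ[X] :=
  Rpol * (2 * Rpol * Dpol * derivative P - ((2 * m : ℕ) : ℝ[X]) * (derivative Rpol * Dpol * P)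
    - ((2 * b : ℕ) : ℝ[X]) * (Rpol * derivative Dpol * P))

def hatQ (Q : ℝ[X]) (m b : ℕ) : ℝ[X] :=
  Rpol * (2 * Rpol * Dpol * derivative Q + derivative Rpol * Dpol * Q
    - ((2 * m : ℕ) : ℝ[X]) * (derivative Rpol * Dpol * Q)
    - ((2 * b : ℕ) : ℝ[X]) * (Rpol * derivative Dpol * Q))

def P0 : ℝ[X] := 6442450944 + (-2617245696) * X + (-1660944384) * X ^ 2 + (-6782976) * X ^ 4 + (-2654208) * X ^ 5 + (-324) * X ^ 8
def Q0 : ℝ[X] := (-3145728) * X + 2359296 * X ^ 2 + 3456 * X ^ 5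

def P1 : ℝ[X] := 425012983458268069232640 + (-956279212781103155773440) * X + 717209409585827366830080 * X ^ 2 + (-179302352396456841707520) * X ^ 3 + (-1459166279268040704000) * X ^ 4 + 2232524407280102277120 * X ^ 5 + (-886443514655334727680) * X ^ 6 + 24623430962648186880 * X ^ 7 + 1731334989561200640 * X ^ 8 + (-1442779157967667200) * X ^ 9 + 108208436847575040 * X ^ 10 + (-774930211799040) * X ^ 12 + 158508452413440 * X ^ 13 + 77396705280 * X ^ 16
def Q1 : ℝ[X] := (-664082786653543858176) + 1743217314965552627712 * X + (-1486404049814377463808) * X ^ 2 + 408566558195051397120 * X ^ 3 + 8116612428428476416 * X ^ 4 + (-6167257477218828288) * X ^ 5 + 2513641910770335744 * X ^ 6 + 6412351813189632 * X ^ 7 + (-5844591496396800) * X ^ 8 + 4734119112081408 * X ^ 9 + (-28179280429056) * X ^ 10 + 2825266397184 * X ^ 12 + (-68797071360) * X ^ 13 + (-40310784) * X ^ 16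

def P2 : ℝ[X] := (-5607680607217613838812936035557703680) + 21028802277066051895548510133341388800 * X + (-31543203415599077843322765200012083200) * X ^ 2 + 23575258802804519117275087532300697600 * X ^ 3 + (-8533453052935873573775868192903659520) * X ^ 4 + 779146388079403491405805851833794560 * X ^ 5 + 446175377903142473766482594915942400 * X ^ 6 + (-178233255860489240923737654307061760) * X ^ 7 + 26595727784407773935924947609190400 * X ^ 8 + 1857936001735628171251508985200640 * X ^ 9 + (-870907500813575705274144836812800) * X ^ 10 + 166752909031287868773673992192000 * X ^ 11 + 3136144454133585670247358136320 * X ^ 12 + (-1805560344444128679447389798400) * X ^ 13 + 465332637033380653873024204800 * X ^ 14 + 1116493335578687196207513600 * X ^ 15 + (-1725799149812178074625638400) * X ^ 16 + 673980733062744100149657600 * X ^ 17 + (-5744153974966569035366400) * X ^ 18 + (-628266841011968488243200) * X ^ 19 + 497003947443396500520960 * X ^ 20 + (-12621432073901152665600) * X ^ 21 + 147907407116029132800 * X ^ 23 + (-11093055533702184960) * X ^ 24 + (-3611020681543680) * X ^ 27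
def Q2 : ℝ[X] := 113906012334107781100887763222265856 + (-325289285223365490259266016125124608) * X + 351164569275224108802616721953259520 * X ^ 2 + (-171122135228871543516479804292464640) * X ^ 3 + 29991697125770836458008572487270400 * X ^ 4 + 4787992450374438500339954302844928 * X ^ 5 + (-3378521814449374372489196621266944) * X ^ 6 + 716922030086849130159472015048704 * X ^ 7 + (-10083252827042423636883029360640) * X ^ 8 + (-12532804106866581738935549952000) * X ^ 9 + 3484243475494886154393071124480 * X ^ 10 + (-163156892772565488939124654080) * X ^ 11 + (-18099658032425096240481435648) * X ^ 12 + 7104029241929024934405734400 * X ^ 13 + (-561650610885620083458048000) * X ^ 14 + (-11793244518974573217054720) * X ^ 15 + 6669601004266738491064320 * X ^ 16 + (-935668831078538784276480) * X ^ 17 + (-4674604471815241728000) * X ^ 18 + 2384048280625773281280 * X ^ 19 + (-778321644557237747712) * X ^ 20 + (-1150390944235782144) * X ^ 21 + (-256783692909772800) * X ^ 23 + 1604898080686080 * X ^ 24 + 940369969152 * X ^ 27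

def P3 : ℝ[X] := 110982780584815440351092316984392741805122377482240 + (-582659598070281061843234664168061894476892481781760) * X + 1258960917259000151482703470791705164851856969564160 * X ^ 2 + (-1365608432977221238695081244143895065180216754176000) * X ^ 3 + 613665209180623253881017702981343857210504322744320 * X ^ 4 + 218950773951367366180623475257367863087195299512320 * X ^ 5 + (-444699107736527597009215770100541275271158195814400) * X ^ 6 + 249859024178673462500792377331790631758223229583360 * X ^ 7 + (-65418451880442661615564632172492054932435763200000) * X ^ 8 + 4645101484903258850812019314137073670616388730880 * X ^ 9 + 1869619686979443020499745096127182741717552988160 * X ^ 10 + (-626756938726374172919313206141048746049022197760) * X ^ 11 + 80202919560163686839971597368038189112722718720 * X ^ 12 + 4279161668506128788312555213451042011008204800 * X ^ 13 + (-2486407761103682190624900224604783732640972800) * X ^ 14 + 424844143268913077746625624351619851181096960 * X ^ 15 + (-5363010022108664990278063814505211625472000) * X ^ 16 + (-5316296946715892345687305287369226778050560) * X ^ 17 + 1182579851834949698010986232649028626022400 * X ^ 18 + (-54798312630672122884551903505421099335680) * X ^ 19 + (-6612952859754278254210168411547070627840) * X ^ 20 + 1938913053498946639051126951182147256320 * X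 ^ 21 + (-149166010335783919623779699995988459520) * X ^ 22 + (-4817630075099870983408576686666547200) * X ^ 23 + 1890111553684326745581859712123535360 * X ^ 24 + (-224972623722025520580368612406067200) * X ^ 25 + (-1862543157929522242549956382556160) * X ^ 26 + 1017039278997148993432510204477440 * X ^ 27 + (-201758767094288964379464223948800) * X ^ 28 + 140699605124421128579878748160 * X ^ 29 + 233138408193516259931093729280 * X ^ 30 + (-100761435961499506144444416000) * X ^ 31 + 971628132485888094964285440 * X ^ 32 + (-21584068757479284937850880) * X ^ 34 + 776336398470613712240640 * X ^ 35 + 210594726147627417600 * X ^ 38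
def Q3 : ℝ[X] := 10231225085162673407366322971998705885159719174144 + (-31148878066480427301663995997377416010539229773824) * X + 35452983216846133527194028847223799564187591507968 * X ^ 2 + (-18681096610493081163711619206999689524457496379392) * X ^ 3 + 6559948475299635694414481631930925707014298402816 * X ^ 4 + (-4813794135923900626231524081935969772248437358592) * X ^ 5 + 3507159450673758317304096188307098035831059775488 * X ^ 6 + (-1264353171984908460866836379465353779199724224512) * X ^ 7 + 188981869796744509434318181517957060859751563264 * X ^ 8 + 8109793996483808241606187899928326188663046144 * X ^ 9 + (-9280285383000587882811818605462501830760071168) * X ^ 10 + 1982048751745110029204388375217281073963597824 * X ^ 11 + (-120664502380575851302659131927030742053289984) * X ^ 12 + (-27486899199492045790696227118995267366420480) * X ^ 13 + 8103992033858836101853206307348228488560640 * X ^ 14 + (-877171821540314413305956055280053179645952) * X ^ 15 + (-39078515290726358986932844143401697804288) * X ^ 16 + 17563174798835529619062041031206630326272 * X ^ 17 + (-2735925351520068708074500790988337840128) * X ^ 18 + (-10931830545078582150770897672736866304) * X ^ 19 + 21538913282110249542862431877186191360 * X ^ 20 + (-4785095134753378943544253170195628032) * X ^ 21 + 66556936567605024298434060273844224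 * X ^ 22 + 14530201907187400973991933357588480 * X ^ 23 + (-4867447601656596392703759117975552) * X ^ 24 + 148998052945812383630173057056768 * X ^ 25 + 4905875120475847816621169049600 * X ^ 26 + (-2695960767078491513733343346688) * X ^ 27 + 162902016771348941838546370560 * X ^ 28 + 999108524111751596640043008 * X ^ 29 + (-629840761639210792872050688) * X ^ 30 + 94842110533160604555804672 * X ^ 31 + 362290319286286399045632 * X ^ 32 + 23002559954684850733056 * X ^ 34 + (-11231718727873462272) * X ^ 35 + (-32905425960566784) * X ^ 38

def P4 : ℝ[X] := (-2928644585662009777175225913291768843096714956169139942336757760) + (-2196483439246507332881419434968826632322536217126854956752568320) * X + 89643980364248080523222930689665236931663509361489767922464194560 * X ^ 2 + (-345658711231267256508309781511217320793210372309691571153173217280) * X ^ 3 + 675695363001565457444963920693452254512978331270423294015302533120 * X ^ 4 + (-812803508466296330046820622326954206570820806313344263093527511040) * X ^ 5 + 640107758909472001958515267221981438756405939224546894668250480640 * X ^ 6 + (-332497418567542066078500809015563526613205038905708292914785812480) * X ^ 7 + 108503435910442133762596895323228133456433485441058027757193134080 * X ^ 8 + (-17802648850124530148502929907053959782160093303442949400134942720)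 * X ^ 9 + (-1116527686891946830206837912492049528374612581809761618870927360) * X ^ 10 + 1357050259632744641023031292504627673257082896713559946108600320 * X ^ 11 + (-339263648407325004713224788678994219400229851489372954060390400) * X ^ 12 + 32072652827129684809201404390638821482848725023160391392296960 * X ^ 13 + 5403912190732171580170476313682328526933048730508763909324800 * X ^ 14 + (-2280226463496304466857929693923659855379878062351391559516160) * X ^ 15 + 341181124821459107359037454397088908516835061927347780321280 * X ^ 16 + (-1473661283215620988594812510405264335066526099632050667520) * X ^ 17 + (-8270246597142534518646339658298601607057098258240283607040) * X ^ 18 + 1605652861761759952005768626492046008530763573438604902400 * X ^ 19 + (-94401103815230009054723681830440267925905729669059051520) * X ^ 20 + (-17989681552320786643671225194549458081610467673773178880) * X ^ 21 + 4464419054071637376648632336682183559620635444127989760 * X ^ 22 + (-418617579807509769513719148939622883118713425656545280) * X ^ 23 + (-22679923127235137178271682081782419378866517914419200) * X ^ 24 + 7967679812047512363255974979758997160916785645486080 * X ^ 25 + (-1017809903920529702874026622399150956413001316433920) * X ^ 26 + (-9247794154832172748837782763880234165751880089600) * X ^ 27 + 9325968473297820317896964116370439623814414336000 * X ^ 28 +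 (-1587568772472323288578498010964235213394191319040) * X ^ 29 + 23483523011647850873998927880188972634587791360 * X ^ 30 + 7060068963658026996547164402259148003208069120 * X ^ 31 + (-1635237384096278868502336506887996467587317760) * X ^ 32 + 56158177611801896549201999551789822220697600 * X ^ 33 + 3316594425494447416252220180213893347409920 * X ^ 34 + (-1081383578370341342103079136648164760616960) * X ^ 35 + 64261737103613945616015775745005332725760 * X ^ 36 + 922171590829823449326583911953643601920 * X ^ 37 + (-417285912503148394016384120408632197120) * X ^ 38 + 44264606471509601521520562393883607040 * X ^ 39 + 137854096310384835675479280357212160 * X ^ 40 + (-71535257035214579907279958195568640) * X ^ 41 + 17449723314586473340246214710394880 * X ^ 42 + (-43958576629587001172027831746560) * X ^ 43 + 3018395917253746113191608320000 * X ^ 45 + (-56343390455403260779576688640) * X ^ 46 + (-14738261314715557193318400) * X ^ 49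
def Q4 : ℝ[X] := 3683685767902996672853213844062302997957586780806496333720453120 + (-13770921562463454176854211691894401347178400892533602365577625600) * X + 19752799678868432032882589083758967041406401747526294514643763200 * X ^ 2 + (-11760952868386118189607025337302795177027417929317742096238510080) * X ^ 3 + (-1000166468401099551407075476432510103685166094321370298853621760) * X ^ 4 + 6183966012759074949677317501784167943319628407155379980124291072 * X ^ 5 + (-4517499354785145389040297127378977298545293024426720138209787904) * X ^ 6 + 1822419981359435044426017755239510077496466050274620959841320960 * X ^ 7 + (-437587036666081338454909489024294974804362240175118909597286400) * X ^ 8 + 40655368734186588111779545058365862583528707369149679404056576 * X ^ 9 + 11233302197025606447507706853034326211204876831577240567283712 * X ^ 10 + (-5521808992805114625999285521402231566451331882545297032740864) * X ^ 11 + 1090571383286139495581261229444410308214595213885315093626880 * X ^ 12 + (-46152980508006395832308125267623995393126993915135530106880) * X ^ 13 + (-28602354421112612529889859443584635603562189256929809793024) * X ^ 14 + 7846535286915627128223452393754817624992485450405325570048 * X ^ 15 + (-796275048389096775499128952376634431602735812573445226496) * X ^ 16 + (-71662879092156153483380029821776896007421936306927697920) * X ^ 17 + 29386990759033785319388238041006768462596230493671260160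 * X ^ 18 + (-4104505856963535975255321832996650183156739314334826496) * X ^ 19 + (-35086598291148257457019312323192795028612962897100800) * X ^ 20 + 66181755499282516712608511809554040835804540751052800 * X ^ 21 + (-11843215669809807306872255615634254038879142192087040) * X ^ 22 + 343939711630055993026872118497044038988643937812480 * X ^ 23 + 93948182088859479760112266895118287811499744296960 * X ^ 24 + (-21538668604799070291724547675168119713100587859968) * X ^ 25 + 1242280121656572299631934673928808317006743863296 * X ^ 26 + 83210531337751832009946354587459361639644528640 * X ^ 27 + (-25390400933715953534624457531740571206795919360) * X ^ 28 + 2270184870954081474075960731572570509212123136 * X ^ 29 + 39914297437186801218434211190189914058653696 * X ^ 30 + (-18978296191309727525745090977879266387034112) * X ^ 31 + 2571833332711392106291089894979199513395200 * X ^ 32 + (-2366982529763578063171049641808284876800) * X ^ 33 + (-8300521600009492748425110786392375427072) * X ^ 34 + 1823043050821187624995681423596674088960 * X ^ 35 + (-23123921892761978150161876927402475520) * X ^ 36 + (-1760153507302446741151605675377295360) * X ^ 37 + 742980264414602775068671098727956480 * X ^ 38 + (-22507605282063907322322176295567360) * X ^ 39 + (-153091848470401951998416372367360) * X ^ 40 +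 132979146127944068432655663759360 * X ^ 41 + (-11049266792799293426107039088640) * X ^ 42 + (-52318862565731599295321210880) * X ^ 43 + (-2240739746905732357640159232) * X ^ 45 + (-4192216551741314046099456) * X ^ 46 + 1535235553616203874304 * X ^ 49

def P5 : ℝ[X] := (-4540311073537633671338439170096596283084781056898699927159044495616677353881600) + 38326987626086301257521824270974990964125252857969344597879806460338654045798400 * X + (-147665768724796111059521111705634978182906958376462704080441929190884157423616000) * X ^ 2 + 343170933371847493954648922117882208238605387370001023739382596308748350783488000 * X ^ 3 + (-535359412949313289175327923981721550541893207063126196574195869560794696279654400) * X ^ 4 + 589841372567558809398528573599763696932547161169532418905926517087306702336819200 * X ^ 5 + (-469292978071405648537485973955367107422227316523882044927355555637086105527910400) * X ^ 6 + 269745021164129909620517468837915870967975776879378300675586871999100557983744000 * X ^ 7 + (-108798587352090015245636464908556828110570000251274999006092086181261931341414400) * X ^ 8 + 27622237832353674769535296630870212281728540743672351784086059631368380769894400 * X ^ 9 + (-2137196330715401054810187289428421409067970978967763481010730831973833926246400) * X ^ 10 + (-1507829120489414549303252964531800976701797536216152958081766384676810784768000) * X ^ 11 + 745686414234742879492975702422319733741274550179275609179614326866260787200000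 * X ^ 12 + (-163402491185385984123739655556669174187136367051231229223536714207523871129600) * X ^ 13 + 9387588571949109057295969714582468583190263484017238513071977316489782886400 * X ^ 14 + 5487111850923350721873728521849006625726688313706002723433865859165480550400 * X ^ 15 + (-1879893893726451553904361751789264203974325573016014166849873434113998848000) * X ^ 16 + 250107044111104280460167062255373494674781608972392071893187103167610880000 * X ^ 17 + 10143463627280433431036976941306592453635194003957485937404539900736307200 * X ^ 18 + (-10519687516523551682863088894672769113464901686654947498445277073349017600) * X ^ 19 + 1877068887699813340934046388571133859569352220035615661670016481230848000 * X ^ 20 + (-84111284578697229584438979029242461546416053276987234196425888550092800) * X ^ 21 + (-34127505404808536847205407915151722765984636019858590651687056179200000) * X ^ 22 + 7927754079129877980266582175496280267760209606740503022087479440179200 * X ^ 23 + (-688692227274779584619216871069540080472899753846953860415337634201600) * X ^ 24 + (-62658101082245869579017768780841891223138227368698060624610145075200) * X ^ 25 + 21796980814128897231256738888852796571299740457054412827047388774400 * X ^ 26 + (-2592638185698452720423745567540759024578869954259064792960466944000) * X ^ 27 + (-31670695190942385237674598326724579240493261373667988849714790400) * X ^ 28 + 41221204741258806815527329893749936686512183071968167502387609600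 * X ^ 29 + (-6216364452925818482136533017066912474814500050522358659887923200) * X ^ 30 + 165641970478929578484975254860732573824080779596557091392716800 * X ^ 31 + 54447823669321142065661761409341159421795937102961871683584000 * X ^ 32 + (-10278120463592821229702026165313031480262981682370821121638400) * X ^ 33 + 557921536978761507477170698689038302314028174954762705305600 * X ^ 34 + 49057395037196712297777655998590249572378944882091858329600 * X ^ 35 + (-11963554811050639208943550604769492735090262420421502566400) * X ^ 36 + 968762388635658934449862720931739333441434071911628800000 * X ^ 37 + 26445720040226081736332088478060905649776935410493030400 * X ^ 38 + (-9707671641134001782541291360010847946075027085354598400) * X ^ 39 + 1106662302327163492718622447076959467884910804887142400 * X ^ 40 + 1413005081977123943195395534864211811270261315993600 * X ^ 41 + (-5290913742091545268389390878646371375725739507712000) * X ^ 42 + 862529572307940896916695222992193439735346102272000 * X ^ 43 + (-12879435821098504321776779877653085201293220249600) * X ^ 44 + (-1805252392560407394665423284580738221098821222400) * X ^ 45 + 444694912640069732911387463970643191148629196800 * X ^ 46 + (-14213591359262089565289449984517772249399296000) * X ^ 47 + (-352203943368106535127128003167173027142041600) * X ^ 48 + 137202555313386524023327671130351750820659200 *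 X ^ 49 + (-8502632697673531283911457289404192863027200) * X ^ 50 + (-45229872732459178713763251689576674099200) * X ^ 51 + 19196859873301184007628539018350690304000 * X ^ 52 + (-2892240482599155274273196140858756300800) * X ^ 53 + (-3765381777648848552892973997830963200) * X ^ 54 + (-432649626628950558874213476728832000) * X ^ 56 + 4107433164198897710831140601856000 * X ^ 57 + 1203349559823895813720060723200 * X ^ 60
def Q5 : ℝ[X] := 1928877500290472762168680656737513427577806420415840637272786888613215422382080 + (-8849927401828655611877945927739855287440848608217694053082327534086142631608320) * X + 17189844560724491743753211957896461891824861179408240908847955083461790625955840 * X ^ 2 + (-18506762539951589277230738425936062703913857859160697535468356465790487940300800) * X ^ 3 + 12441213226426955661039651064944193535840679120300178272957903509955846372065280 * X ^ 4 + (-6029387736110704642239647232724068368477776392474064443730274398497098359111680) * X ^ 5 + 2703048926605017529808231146285724296063091121758424184431164346853688239718400 * X ^ 6 + (-1247351070565391634613103126555786528875299439613656688152578072680946015928320) * X ^ 7 + 473576800708138558113709956040528077201332862989627780846366239140656437002240 * X ^ 8 + (-113660688940722242949816882843735270563289617667895486338756006954583908679680) * X ^ 9 + 6336179910202187539215415257930757147491492427891552633295267564192928890880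 * X ^ 10 + 7191194117211361614037261731737257088101564436455681889603073566141117890560 * X ^ 11 + (-3105442279679959725970658132821982124543634340106134956801529059202071265280) * X ^ 12 + 554076858323025232238849115843170933318262102900693667918672841625525288960 * X ^ 13 + 8277427970089848844104132616955338665904875641787869856402934779126743040 * X ^ 14 + (-27880878596532641958426194401347108492768099920853721404376498284338872320) * X ^ 15 + 6506529279135323000406496663244071487454237023259307940340280841742581760 * X ^ 16 + (-493286718714405272200552342552740056686417507118874856667006326422896640) * X ^ 17 + (-113979542132173590110957337616442084049528771587666809867935658247454720) * X ^ 18 + 37423795567616944003761450124262982689296609679903976622736789880176640 * X ^ 19 + (-4549937322108473138097900481651307792900852599610920457502395109212160) * X ^ 20 + (-148788135312007190071672187654479790293706450539093526212574372167680) * X ^ 21 + 129831278853790009125158063205501771990457254614139564385429251686400 * X ^ 22 + (-20733907056932019350070803303082070433702746799062642327949955563520) * X ^ 23 + 675872046883582903810355897069729227578001275474777466165474099200 * X ^ 24 + 292020195906348107182364287918157503077453157526458307709983784960 * X ^ 25 + (-59237928440764002236465352432965397184865751632018140119328358400) * X ^ 26 + 4167380743173622994923295283314603406998713661990543245474529280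 * X ^ 27 + 422123831609891305895620768080563858684921869973398693651415040 * X ^ 28 + (-114460244043056202660106272726747691694562468427146737504747520) * X ^ 29 + 11592527712363433404989274609208435819883176791158572827279360 * X ^ 30 + 320282140535926849776602545989210040502665359822141920378880 * X ^ 31 + (-153408607411503890023126547803631626422207575820657764597760) * X ^ 32 + 20563468830666206597606832916219259364615335189963593482240 * X ^ 33 + (-116283172345295703426590533866911527019707881843641548800) * X ^ 34 + (-142266615971662984298353516843231456103922834075801354240) * X ^ 35 + 24951132439777997227556659144925082371540286781595320320 * X ^ 36 + (-699177808198479972544968072875107065950615857224744960) * X ^ 37 + (-88885338744276037810410298466264781263430105893437440) * X ^ 38 + 20794048411522199615798354396134339951208466260951040 * X ^ 39 + (-1044434587448743074971766196598689235860921830604800) * X ^ 40 + (-34986258236032222825137041887149487457064242380800) * X ^ 41 + 11455001063599837166698810985224395979219166822400 * X ^ 42 + (-931666619731744699315133772054898069159595212800) * X ^ 43 + (-6448334195074005549116310751187744267415060480) * X ^ 44 + 3785642717747816901225217946985349905383424000 * X ^ 45 + (-527707124932293567533008988524029499743928320) * X ^ 46 + 2089521675534755016041781485793579903221760 * X ^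 47 + 591157228580694086725843339289661548789760 * X ^ 48 + (-175478673896705159041317415550511942205440) * X ^ 49 + 2744430999522314611268285373390237204480 * X ^ 50 + 20778142187678350572488841384721121280 * X ^ 51 + (-26086062014486359512165364393542942720) * X ^ 52 + 1307326866971587699586544418506670080 * X ^ 53 + 6712719342633627115986892640747520 * X ^ 54 + 240700473223441356923408209674240 * X ^ 56 + 702908949230466126109495787520 * X ^ 57 + (-89534937486897009949409280) * X ^ 60


lemma step (P Q : ℝ[X]) (c m b : ℕ) (x : ℝ) (hR : 0 < Rpol.eval x)
    (hD : Dpol.eval x ≠ 0) :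
    HasDerivAt (gg P Q c (m+1) (b+1))
      (gg (hatP P (m+1) (b+1)) (hatQ Q (m+1) (b+1)) (c+1) (m+3) (b+2) x) x := by
  have htpos : 0 < Real.sqrt (Rpol.eval x) := Real.sqrt_pos.2 hR
  have hnum : HasDerivAt (fun y => P.eval y + Q.eval y * Real.sqrt (Rpol.eval y))
      (P.derivative.eval x + (Q.derivative.eval x * Real.sqrt (Rpol.eval x) +
        Q.eval x * (Rpol.derivative.eval x / (2 * Real.sqrt (Rpol.eval x))))) x :=
    (P.hasDerivAt x).add ((Q.hasDerivAt x).mul ((Rpol.hasDerivAt x).sqrt hR.ne'))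
  have hden : HasDerivAt (fun y => 2 ^ c * Rpol.eval y ^ (m+1) * Dpol.eval y ^ (b+1))
      (2 ^ c * (((m:ℝ)+1) * Rpol.eval x ^ m * Rpol.derivative.eval x) * Dpol.eval x ^ (b+1)
        + 2 ^ c * Rpol.eval x ^ (m+1) *
          (((b:ℝ)+1) * Dpol.eval x ^ b * Dpol.derivative.eval x)) x := by
    have h1 := (((Rpol.hasDerivAt x).fun_pow (m+1)).const_mul ((2:ℝ) ^ c)).fun_mul
      ((Dpol.hasDerivAt x).fun_pow (b+1))
    simpa [Nat.add_sub_cancel, Nat.cast_add, Nat.cast_one, mul_comm, mul_assoc, mul_left_comm]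
      using h1
  have hden0 : (2:ℝ) ^ c * Rpol.eval x ^ (m+1) * Dpol.eval x ^ (b+1) ≠ 0 := by positivity
  have H := hnum.fun_div hden hden0
  refine H.congr_deriv ?_
  have ht2 : Rpol.eval x = Real.sqrt (Rpol.eval x) ^ 2 := (Real.sq_sqrt hR.le).symm
  set t := Real.sqrt (Rpol.eval x) with htdef
  have htne : t ≠ 0 := htpos.ne'
  simp only [gg, hatP, hatQ, eval_mul, eval_add, eval_sub, eval_natCast, eval_ofNat]
  rw [ht2]
  push_cast
  have hDne : Dpol.eval x ≠ 0 := hD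
  rw [Real.sqrt_sq htpos.le]
  field_simp
  ring

lemma hRD : ∀ᶠ y in 𝓝 (0:ℝ), 0 < Rpol.eval y ∧ Dpol.eval y ≠ 0 := by
  have hc : Continuous fun y : ℝ => Rpol.eval y := Rpol.continuous
  have hc2 : Continuous fun y : ℝ => Dpol.eval y := Dpol.continuous
  have h1 : ∀ᶠ y in 𝓝 (0:ℝ), 0 < Rpol.eval y :=
    (hc.tendsto 0).eventually (eventually_gt_nhds (by norm_num [Rpol]))
  have h2 : ∀ᶠ y in 𝓝 (0:ℝ), 0 < Dpol.eval y :=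
    (hc2.tendsto 0).eventually (eventually_gt_nhds (by norm_num [Dpol]))
  filter_upwards [h1, h2] with y hy1 hy2 using ⟨hy1, hy2.ne'⟩

lemma key_s14 (P Q : ℝ[X]) (c m b n : ℕ) :
    iteratedDeriv (n+1) (gg P Q c (m+1) (b+1)) 0 =
      iteratedDeriv n (gg (hatP P (m+1) (b+1)) (hatQ Q (m+1) (b+1)) (c+1) (m+3) (b+2)) 0 := by
  rw [iteratedDeriv_succ']
  exact Filter.EventuallyEq.iteratedDeriv_eq n
    (hRD.mono fun y hy => ((step P Q c m b y hy.1 hy.2).deriv))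

lemma idP0 : hatP P0 1 1 = P1 := by
  simp only [hatP, Rpol, Dpol, P0, P1]
  simp only [derivative_add, derivative_sub, derivative_mul, derivative_ofNat, derivative_X_pow,
    derivative_X, derivative_one, derivative_neg, map_ofNat, Nat.cast_ofNat]
  ring
lemma idQ0 : hatQ Q0 1 1 = Q1 := by
  simp only [hatQ, Rpol, Dpol, Q0, Q1]
  simp only [derivative_add, derivative_sub, derivative_mul, derivative_ofNat, derivative_X_pow,
    derivative_X, derivative_one, derivative_neg, map_ofNat, Nat.cast_ofNat]
  ring

lemma idP1 : hatP P1 3 2 = P2 := by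
  simp only [hatP, Rpol, Dpol, P1, P2]
  simp only [derivative_add, derivative_sub, derivative_mul, derivative_ofNat, derivative_X_pow,
    derivative_X, derivative_one, derivative_neg, map_ofNat, Nat.cast_ofNat]
  ring
lemma idQ1 : hatQ Q1 3 2 = Q2 := by
  simp only [hatQ, Rpol, Dpol, Q1, Q2]
  simp only [derivative_add, derivative_sub, derivative_mul, derivative_ofNat, derivative_X_pow,
    derivative_X, derivative_one, derivative_neg, map_ofNat, Nat.cast_ofNat]
  ring

lemma idP2 : hatP P2 5 3 = P3 := by
  simp only [hatP, Rpol, Dpol, P2, P3]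
  simp only [derivative_add, derivative_sub, derivative_mul, derivative_ofNat, derivative_X_pow,
    derivative_X, derivative_one, derivative_neg, map_ofNat, Nat.cast_ofNat]
  ring
lemma idQ2 : hatQ Q2 5 3 = Q3 := by
  simp only [hatQ, Rpol, Dpol, Q2, Q3]
  simp only [derivative_add, derivative_sub, derivative_mul, derivative_ofNat, derivative_X_pow,
    derivative_X, derivative_one, derivative_neg, map_ofNat, Nat.cast_ofNat]
  ring

lemma idP3 : hatP P3 7 4 = P4 := by
  simp only [hatP, Rpol, Dpol, P3, P4]
  simp only [derivative_add, derivative_sub, derivative_mul, derivative_ofNat, derivative_X_pow,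
    derivative_X, derivative_one, derivative_neg, map_ofNat, Nat.cast_ofNat]
  ring
lemma idQ3 : hatQ Q3 7 4 = Q4 := by
  simp only [hatQ, Rpol, Dpol, Q3, Q4]
  simp only [derivative_add, derivative_sub, derivative_mul, derivative_ofNat, derivative_X_pow,
    derivative_X, derivative_one, derivative_neg, map_ofNat, Nat.cast_ofNat]
  ring

lemma idP4 : hatP P4 9 5 = P5 := by
  simp only [hatP, Rpol, Dpol, P4, P5]
  simp only [derivative_add, derivative_sub, derivative_mul, derivative_ofNat, derivative_X_pow,
    derivative_X, derivative_one, derivative_neg, map_ofNat, Nat.cast_ofNat]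
  ring
lemma idQ4 : hatQ Q4 9 5 = Q5 := by
  simp only [hatQ, Rpol, Dpol, Q4, Q5]
  simp only [derivative_add, derivative_sub, derivative_mul, derivative_ofNat, derivative_X_pow,
    derivative_X, derivative_one, derivative_neg, map_ofNat, Nat.cast_ofNat]
  ring

lemma d1 (n : ℕ) : iteratedDeriv (n+1) (gg P0 Q0 0 1 1) 0
    = iteratedDeriv n (gg P1 Q1 1 3 2) 0 := by
  have := key_s14 P0 Q0 0 0 0 n
  rwa [idP0, idQ0] at this

lemma d2 (n : ℕ) : iteratedDeriv (n+1) (gg P1 Q1 1 3 2) 0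
    = iteratedDeriv n (gg P2 Q2 2 5 3) 0 := by
  have := key_s14 P1 Q1 1 2 1 n
  rwa [idP1, idQ1] at this

lemma d3 (n : ℕ) : iteratedDeriv (n+1) (gg P2 Q2 2 5 3) 0
    = iteratedDeriv n (gg P3 Q3 3 7 4) 0 := by
  have := key_s14 P2 Q2 2 4 2 n
  rwa [idP2, idQ2] at this

lemma d4 (n : ℕ) : iteratedDeriv (n+1) (gg P3 Q3 3 7 4) 0
    = iteratedDeriv n (gg P4 Q4 4 9 5) 0 := by
  have := key_s14 P3 Q3 3 6 3 n
  rwa [idP3, idQ3] at this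

lemma d5 (n : ℕ) : iteratedDeriv (n+1) (gg P4 Q4 4 9 5) 0
    = iteratedDeriv n (gg P5 Q5 5 11 6) 0 := by
  have := key_s14 P4 Q4 4 8 4 n
  rwa [idP4, idQ4] at this

lemma sqrt16384 : Real.sqrt 16384 = 128 := by
  rw [show (16384:ℝ) = 128 ^ 2 by norm_num, Real.sqrt_sq (by norm_num)]

lemma e0 : gg P0 Q0 0 1 1 0 = 1 / 1 := by
  simp only [gg, P0, Q0, Rpol, Dpol, eval_add, eval_sub, eval_mul, eval_pow, eval_ofNat,
    eval_neg, eval_X]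
  norm_num [sqrt16384]

lemma e1 : gg P1 Q1 1 3 2 0 = 1 / 4 := by
  simp only [gg, P1, Q1, Rpol, Dpol, eval_add, eval_sub, eval_mul, eval_pow, eval_ofNat,
    eval_neg, eval_X]
  norm_num [sqrt16384]

lemma e2 : gg P2 Q2 2 5 3 0 = 1 / 32 := by
  simp only [gg, P2, Q2, Rpol, Dpol, eval_add, eval_sub, eval_mul, eval_pow, eval_ofNat,
    eval_neg, eval_X]
  norm_num [sqrt16384]

lemma e3 : gg P3 Q3 3 7 4 0 = 3 / 128 := by
  simp only [gg, P3, Q3, Rpol, Dpol, eval_add, eval_sub, eval_mul, eval_pow, eval_ofNat,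
    eval_neg, eval_X]
  norm_num [sqrt16384]

lemma e4 : gg P4 Q4 4 9 5 0 = 75 / 2048 := by
  simp only [gg, P4, Q4, Rpol, Dpol, eval_add, eval_sub, eval_mul, eval_pow, eval_ofNat,
    eval_neg, eval_X]
  norm_num [sqrt16384]

lemma e5 : gg P5 Q5 5 11 6 0 = 735 / 8192 := by
  simp only [gg, P5, Q5, Rpol, Dpol, eval_add, eval_sub, eval_mul, eval_pow, eval_ofNat,
    eval_neg, eval_X]
  norm_num [sqrt16384]

lemma hfg0 : (fun x : ℝ =>
      1 + 192 * x / (640 + Real.sqrt (16384 - 12288 * x - 18 * x ^ 4)))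
    =ᶠ[𝓝 0] gg P0 Q0 0 1 1 := by
  filter_upwards [hRD] with y hy
  obtain ⟨hR, hD⟩ := hy
  have hre : Rpol.eval y = 16384 - 12288 * y - 18 * y ^ 4 := by simp [Rpol]
  have hde : Dpol.eval y = 393216 + 12288 * y + 18 * y ^ 4 := by simp [Dpol]
  obtain ⟨t, htpos, ht2, hsq⟩ : ∃ t : ℝ, 0 < t ∧ t ^ 2 = 16384 - 12288 * y - 18 * y ^ 4 ∧
      Real.sqrt (16384 - 12288 * y - 18 * y ^ 4) = t := by
    refine ⟨Real.sqrt (16384 - 12288 * y - 18 * y ^ 4), ?_, ?_, rfl⟩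
    · exact Real.sqrt_pos.2 (by rw [← hre]; exact hR)
    · exact Real.sq_sqrt (by rw [← hre]; exact hR.le)
  have h640 : (640:ℝ) + t ≠ 0 := by positivity
  have hDne : (393216 : ℝ) + 12288 * y + 18 * y ^ 4 ≠ 0 := by rw [← hde]; exact hD
  have hRne : (16384 : ℝ) - 12288 * y - 18 * y ^ 4 ≠ 0 := by rw [← hre]; exact hR.ne'
  have hstep : 192 * y / (640 + t)
      = (122880 * y - 192 * y * t) / (393216 + 12288 * y + 18 * y ^ 4) := by
    rw [div_eq_div_iff h640 hDne]
    linear_combination (192 * y) * ht2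
  show _ = gg P0 Q0 0 1 1 y
  simp only [gg, P0, Q0, eval_add, eval_sub, eval_mul, eval_pow, eval_ofNat, eval_neg, eval_X,
    pow_zero, pow_one]
  rw [hre, hde, hsq, hstep]
  have hRDne : (1:ℝ) * (16384 - 12288 * y - 18 * y ^ 4) * (393216 + 12288 * y + 18 * y ^ 4) ≠ 0 := by
    rw [one_mul]; exact mul_ne_zero hRne hDne
  rw [add_div' _ _ _ hDne, div_eq_div_iff hDne hRDne]
  ring

lemma c0 : iteratedDeriv 0 (gg P0 Q0 0 1 1) 0 = 1 / 1 := by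
  rw [iteratedDeriv_zero]; exact e0

lemma c1 : iteratedDeriv 1 (gg P0 Q0 0 1 1) 0 = 1 / 4 := by
  have h1 : iteratedDeriv 1 (gg P0 Q0 0 1 1) 0 = iteratedDeriv 0 (gg P1 Q1 1 3 2) 0 := d1 0
  rw [h1, iteratedDeriv_zero]; exact e1

lemma c2 : iteratedDeriv 2 (gg P0 Q0 0 1 1) 0 = 1 / 32 := by
  have h1 : iteratedDeriv 2 (gg P0 Q0 0 1 1) 0 = iteratedDeriv 1 (gg P1 Q1 1 3 2) 0 := d1 1
  have h2 : iteratedDeriv 1 (gg P1 Q1 1 3 2) 0 = iteratedDeriv 0 (gg P2 Q2 2 5 3) 0 := d2 0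
  rw [h1, h2, iteratedDeriv_zero]; exact e2

lemma c3 : iteratedDeriv 3 (gg P0 Q0 0 1 1) 0 = 3 / 128 := by
  have h1 : iteratedDeriv 3 (gg P0 Q0 0 1 1) 0 = iteratedDeriv 2 (gg P1 Q1 1 3 2) 0 := d1 2
  have h2 : iteratedDeriv 2 (gg P1 Q1 1 3 2) 0 = iteratedDeriv 1 (gg P2 Q2 2 5 3) 0 := d2 1
  have h3 : iteratedDeriv 1 (gg P2 Q2 2 5 3) 0 = iteratedDeriv 0 (gg P3 Q3 3 7 4) 0 := d3 0
  rw [h1, h2, h3, iteratedDeriv_zero]; exact e3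

lemma c4 : iteratedDeriv 4 (gg P0 Q0 0 1 1) 0 = 75 / 2048 := by
  have h1 : iteratedDeriv 4 (gg P0 Q0 0 1 1) 0 = iteratedDeriv 3 (gg P1 Q1 1 3 2) 0 := d1 3
  have h2 : iteratedDeriv 3 (gg P1 Q1 1 3 2) 0 = iteratedDeriv 2 (gg P2 Q2 2 5 3) 0 := d2 2
  have h3 : iteratedDeriv 2 (gg P2 Q2 2 5 3) 0 = iteratedDeriv 1 (gg P3 Q3 3 7 4) 0 := d3 1
  have h4 : iteratedDeriv 1 (gg P3 Q3 3 7 4) 0 = iteratedDeriv 0 (gg P4 Q4 4 9 5) 0 := d4 0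
  rw [h1, h2, h3, h4, iteratedDeriv_zero]; exact e4

lemma c5 : iteratedDeriv 5 (gg P0 Q0 0 1 1) 0 = 735 / 8192 := by
  have h1 : iteratedDeriv 5 (gg P0 Q0 0 1 1) 0 = iteratedDeriv 4 (gg P1 Q1 1 3 2) 0 := d1 4
  have h2 : iteratedDeriv 4 (gg P1 Q1 1 3 2) 0 = iteratedDeriv 3 (gg P2 Q2 2 5 3) 0 := d2 3
  have h3 : iteratedDeriv 3 (gg P2 Q2 2 5 3) 0 = iteratedDeriv 2 (gg P3 Q3 3 7 4) 0 := d3 2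
  have h4 : iteratedDeriv 2 (gg P3 Q3 3 7 4) 0 = iteratedDeriv 1 (gg P4 Q4 4 9 5) 0 := d4 1
  have h5 : iteratedDeriv 1 (gg P4 Q4 4 9 5) 0 = iteratedDeriv 0 (gg P5 Q5 5 11 6) 0 := d5 0
  rw [h1, h2, h3, h4, h5, iteratedDeriv_zero]; exact e5

end

/-- The Maclaurin expansion of
`A₁(x) = 1 + 192x/(640 + √(16384 - 12288x - 18x⁴))` agrees with
`E(x) = ∑ (binom(2n,n)/((2n-1)4^n))² xⁿ` in the coefficients of `x⁰` through `x⁵`. -/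
theorem stmt_14 :
    ∀ n : ℕ, n ≤ 5 →
      iteratedDeriv n
          (fun x : ℝ =>
            1 + 192 * x / (640 + Real.sqrt (16384 - 12288 * x - 18 * x ^ 4))) 0
          / n.factorial =
        ((Nat.choose (2 * n) n : ℝ) / ((2 * (n : ℝ) - 1) * 4 ^ n)) ^ 2 := by
  intro n hn
  interval_cases n <;>
    rw [Filter.EventuallyEq.iteratedDeriv_eq _ hfg0]
  · rw [c0]; norm_num [Nat.choose, Nat.factorial]
  · rw [c1]; norm_num [Nat.choose, Nat.factorial]
  · rw [c2]; norm_num [Nat.choose, Nat.factorial]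
  · rw [c3]; norm_num [Nat.choose, Nat.factorial]
  · rw [c4]; norm_num [Nat.choose, Nat.factorial]
  · rw [c5]; norm_num [Nat.choose, Nat.factorial]
end

section
/- If E(x) = 1 + a₁x/(1 + a₂x/(1 + a₃x/(1 + ⋯))) is the continued fraction expansion (Viscovatov form) of E(x) = ∑ (binom(2n,n)/((2n-1)4^n))² x^n, then a₁ = 1/4, a₂ = -1/16, a₃ = -3/16, a₄ = -3/16, a₅ = -11/48. -/
open Filter Topology

open FormalMultilinearSeries Finset in
private lemma ofScalars_coeff' (c : ℕ → ℝ) (n : ℕ) :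
    (ofScalars ℝ c).coeff n = c n := by
  simp [FormalMultilinearSeries.coeff, FormalMultilinearSeries.ofScalars, List.prod_ofFn]

open FormalMultilinearSeries Finset in
private lemma hasFPowerSeriesAt_mul' {f g : ℝ → ℝ} {p q : FormalMultilinearSeries ℝ ℝ ℝ}
    (hf : HasFPowerSeriesAt f p 0) (hg : HasFPowerSeriesAt g q 0) :
    HasFPowerSeriesAt (fun x => f x * g x)
      (ofScalars ℝ fun k => ∑ i ∈ Finset.range (k + 1), p.coeff i * q.coeff (k - i)) 0 := by
  obtain ⟨rf, Hf⟩ := hf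
  obtain ⟨rg, Hg⟩ := hg
  obtain ⟨R, hR0, hRlt⟩ := ENNReal.lt_iff_exists_nnreal_btwn.mp (lt_min Hf.r_pos Hg.r_pos)
  set c : ℕ → ℝ := fun k => ∑ i ∈ Finset.range (k + 1), p.coeff i * q.coeff (k - i) with hc
  have hpR : (R : ENNReal) < p.radius := lt_of_lt_of_le (hRlt.trans_le (min_le_left _ _)) Hf.r_le
  have hqR : (R : ENNReal) < q.radius := lt_of_lt_of_le (hRlt.trans_le (min_le_right _ _)) Hg.r_le
  have hFn : ∀ x : ℝ, (↑‖x‖₊ : ENNReal) < R → Summable fun n => ‖p.coeff n * x ^ n‖ := by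
    intro x hx
    refine (p.summable_norm_apply (mem_emetric_ball_zero_iff.mpr (hx.trans hpR))).congr fun n => ?_
    rw [FormalMultilinearSeries.apply_eq_pow_smul_coeff, smul_eq_mul, mul_comm]
  have hGn : ∀ x : ℝ, (↑‖x‖₊ : ENNReal) < R → Summable fun n => ‖q.coeff n * x ^ n‖ := by
    intro x hx
    refine (q.summable_norm_apply (mem_emetric_ball_zero_iff.mpr (hx.trans hqR))).congr fun n => ?_
    rw [FormalMultilinearSeries.apply_eq_pow_smul_coeff, smul_eq_mul, mul_comm]
  have hsum_eq : ∀ (x : ℝ) (n : ℕ),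
      ∑ k ∈ Finset.range (n + 1), (p.coeff k * x ^ k) * (q.coeff (n - k) * x ^ (n - k))
        = c n * x ^ n := by
    intro x n
    rw [hc, Finset.sum_mul]
    refine Finset.sum_congr rfl fun k hk => ?_
    have hk' : k ≤ n := Nat.lt_succ_iff.mp (Finset.mem_range.mp hk)
    rw [mul_mul_mul_comm, ← pow_add, Nat.add_sub_cancel' hk']
  have hFS : ∀ x : ℝ, (↑‖x‖₊ : ENNReal) < R → HasSum (fun n => p.coeff n * x ^ n) (f x) := by
    intro x hx
    have h := Hf.hasSum (y := x)
      (mem_emetric_ball_zero_iff.mpr (hx.trans (hRlt.trans_le (min_le_left _ _))))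
    rw [zero_add] at h
    have : (fun n => p n fun _ => x) = fun n => p.coeff n * x ^ n := funext fun n => by
      rw [FormalMultilinearSeries.apply_eq_pow_smul_coeff, smul_eq_mul, mul_comm]
    rwa [this] at h
  have hGS : ∀ x : ℝ, (↑‖x‖₊ : ENNReal) < R → HasSum (fun n => q.coeff n * x ^ n) (g x) := by
    intro x hx
    have h := Hg.hasSum (y := x)
      (mem_emetric_ball_zero_iff.mpr (hx.trans (hRlt.trans_le (min_le_right _ _))))
    rw [zero_add] at h
    have : (fun n => q n fun _ => x) = fun n => q.coeff n * x ^ n := funext fun n => by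
      rw [FormalMultilinearSeries.apply_eq_pow_smul_coeff, smul_eq_mul, mul_comm]
    rwa [this] at h
  have hCS : ∀ x : ℝ, (↑‖x‖₊ : ENNReal) < R → HasSum (fun n => c n * x ^ n) (f x * g x) := by
    intro x hx
    have h4 := hasSum_sum_range_mul_of_summable_norm (hFn x hx) (hGn x hx)
    rw [(hFS x hx).tsum_eq, (hGS x hx).tsum_eq] at h4
    have : (fun n => ∑ k ∈ Finset.range (n + 1),
        (p.coeff k * x ^ k) * (q.coeff (n - k) * x ^ (n - k))) = fun n => c n * x ^ n :=
      funext fun n => hsum_eq x n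
    rwa [this] at h4
  have hCn : ∀ x : ℝ, (↑‖x‖₊ : ENNReal) < R → Summable fun n => ‖c n * x ^ n‖ := by
    intro x hx
    refine (summable_norm_sum_mul_range_of_summable_norm (hFn x hx) (hGn x hx)).congr fun n => ?_
    rw [hsum_eq x n]
  refine ⟨R, ?_, hR0, ?_⟩
  · refine ENNReal.le_of_forall_nnreal_lt fun r hr => ?_
    have hr' : (↑‖((r : ℝ))‖₊ : ENNReal) < R := by
      rwa [show ‖((r:ℝ))‖₊ = r from NNReal.eq (by simp [Real.norm_of_nonneg r.coe_nonneg])]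
    refine FormalMultilinearSeries.le_radius_of_summable _ ((hCn _ hr').congr fun n => ?_)
    rw [FormalMultilinearSeries.ofScalars_norm, norm_mul, norm_pow,
      Real.norm_of_nonneg r.coe_nonneg]
  · intro y hy
    have hy' : (↑‖y‖₊ : ENNReal) < R := mem_emetric_ball_zero_iff.mp hy
    have : (fun n => ofScalars ℝ c n fun _ => y) = fun n => c n * y ^ n := funext fun n => by
      rw [FormalMultilinearSeries.ofScalars_apply_eq, smul_eq_mul]
    rw [this]
    simpa using hCS y hy'

open FormalMultilinearSeries in
private lemma hasFPowerSeriesAt_linear' (a : ℝ) :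
    HasFPowerSeriesAt (fun x : ℝ => a * x)
      (ofScalars ℝ fun k => if k = 1 then a else 0) 0 := by
  refine ⟨1, ?_, one_pos, ?_⟩
  · refine FormalMultilinearSeries.le_radius_of_bound _ ‖a‖ fun n => ?_
    rw [FormalMultilinearSeries.ofScalars_norm]
    split_ifs <;> simp
  · intro y _
    have : (fun n => ofScalars ℝ (fun k => if k = 1 then a else 0) n fun _ => y)
        = fun n : ℕ => if n = 1 then a * y else 0 := funext fun n => by
      rw [FormalMultilinearSeries.ofScalars_apply_eq, smul_eq_mul]
      split_ifs with h <;> simp [h]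
    rw [this]
    simpa using hasSum_ite_eq 1 (a * y)

/-- The Maclaurin coefficients of `E`. -/
noncomputable def eCoeff : ℕ → ℝ := fun n =>
  ((Nat.choose (2 * n) n : ℝ) / ((2 * (n : ℝ) - 1) * 4 ^ n)) ^ 2

private lemma abs_eCoeff_le (n : ℕ) : ‖eCoeff n‖ ≤ 1 := by
  have h1 : ((Nat.choose (2 * n) n : ℝ)) ≤ 4 ^ n := by
    have h2 : Nat.choose (2 * n) n ≤ Nat.choose (2 * n + 1) n :=
      Nat.choose_mono n (Nat.le_succ _)
    have h3 : Nat.choose (2 * n + 1) n ≤ 4 ^ n := Nat.choose_middle_le_pow n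
    calc ((Nat.choose (2 * n) n : ℝ)) ≤ ((4:ℕ) ^ n : ℝ) := by exact_mod_cast h2.trans h3
      _ = 4 ^ n := by push_cast; ring
  have habs : (1:ℝ) ≤ |2 * (n : ℝ) - 1| := by
    rcases Nat.eq_zero_or_pos n with h | h
    · simp [h]
    · have : (1:ℝ) ≤ (n:ℝ) := by exact_mod_cast h
      rw [abs_of_nonneg (by linarith)]; linarith
  have hpow : (0:ℝ) < 4 ^ n := by positivity
  have hd : |((Nat.choose (2 * n) n : ℝ) / ((2 * (n : ℝ) - 1) * 4 ^ n))| ≤ 1 := by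
    rw [abs_div, abs_mul, abs_of_nonneg hpow.le, div_le_one (by nlinarith)]
    rw [abs_of_nonneg (Nat.cast_nonneg _)]
    nlinarith
  rw [eCoeff, Real.norm_eq_abs, abs_pow]
  exact pow_le_one₀ (abs_nonneg _) hd

open FormalMultilinearSeries in
private lemma hasFPowerSeriesAt_E :
    HasFPowerSeriesAt (fun x : ℝ => ∑' n : ℕ, eCoeff n * x ^ n) (ofScalars ℝ eCoeff) 0 := by
  refine ⟨1, ?_, one_pos, ?_⟩
  · refine FormalMultilinearSeries.le_radius_of_bound _ 1 fun n => ?_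
    rw [FormalMultilinearSeries.ofScalars_norm]
    simpa using abs_eCoeff_le n
  · intro y hy
    have hy1 : |y| < 1 := by
      have h := mem_emetric_ball_zero_iff.mp hy
      rw [enorm_eq_nnnorm, ENNReal.coe_lt_one_iff, ← NNReal.coe_lt_one] at h
      simpa [Real.norm_eq_abs] using h
    have hsum : Summable fun n : ℕ => eCoeff n * y ^ n := by
      refine Summable.of_norm_bounded
        (summable_geometric_of_lt_one (abs_nonneg y) hy1) fun n => ?_
      rw [norm_mul, norm_pow, Real.norm_eq_abs y, Real.norm_eq_abs (eCoeff n)]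
      have h1 := abs_eCoeff_le n
      rw [Real.norm_eq_abs] at h1
      have h0 : (0:ℝ) ≤ |y| ^ n := by positivity
      nlinarith [abs_nonneg (eCoeff n)]
    have : (fun n => ofScalars ℝ eCoeff n fun _ => y) = fun n => eCoeff n * y ^ n :=
      funext fun n => by rw [FormalMultilinearSeries.ofScalars_apply_eq, smul_eq_mul]
    rw [this]
    simpa using hsum.hasSum

open FormalMultilinearSeries Finset in
/-- One step of the Viscovatov algorithm, at the level of power series coefficients:
if `g = a x / f` off `0` with `a` the linear coefficient of `f` (nonzero) then
the coefficients of `g - 1` satisfy the Cauchy product equations `(g-1)·f + f = a·x`. -/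
private lemma step' {f g : ℝ → ℝ} {P : FormalMultilinearSeries ℝ ℝ ℝ}
    (hf : HasFPowerSeriesAt f P 0) (hg : AnalyticAt ℝ g 0)
    (hP1 : P.coeff 1 ≠ 0)
    (hrec : ∀ᶠ x in nhdsWithin (0:ℝ) {0}ᶜ, g x = P.coeff 1 * x / f x) :
    ∃ Q : FormalMultilinearSeries ℝ ℝ ℝ,
      HasFPowerSeriesAt (fun x => g x - 1) Q 0 ∧
      ∀ k, ((∑ i ∈ Finset.range (k + 1), Q.coeff i * P.coeff (k - i)) + P.coeff k)
          = if k = 1 then P.coeff 1 else 0 := by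
  have hfz : ∀ᶠ x in nhdsWithin (0:ℝ) {0}ᶜ, f x ≠ 0 := by
    rcases hf.analyticAt.eventually_eq_zero_or_eventually_ne_zero with h | h
    · exfalso
      apply hP1
      have hzero : HasFPowerSeriesAt (0 : ℝ → ℝ) P 0 :=
        hf.congr (by filter_upwards [h] with x hx using by simpa using hx)
      rw [HasFPowerSeriesAt.eq_zero hzero]
      simp [FormalMultilinearSeries.coeff]
    · exact h
  have hmul : ∀ᶠ x in nhdsWithin (0:ℝ) {0}ᶜ, g x * f x = P.coeff 1 * x := by
    filter_upwards [hrec, hfz] with x h1 h2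
    rw [h1, div_mul_cancel₀ _ h2]
  have h0 : g 0 * f 0 = 0 := by
    have hcont : Tendsto (fun x => g x * f x) (nhdsWithin (0:ℝ) {0}ᶜ) (nhds (g 0 * f 0)) :=
      ((hg.continuousAt.mul hf.analyticAt.continuousAt).tendsto).mono_left nhdsWithin_le_nhds
    have hcont2 : Tendsto (fun x => g x * f x) (nhdsWithin (0:ℝ) {0}ᶜ)
        (nhds (P.coeff 1 * 0)) := by
      refine Tendsto.congr' (hmul.mono fun x hx => hx.symm) ?_
      exact ((continuous_const.mul continuous_id).tendsto 0).mono_left nhdsWithin_le_nhds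
    have := tendsto_nhds_unique hcont hcont2
    rwa [mul_zero] at this
  have hmul' : ∀ᶠ x in nhds (0:ℝ), g x * f x = P.coeff 1 * x := by
    have h := eventually_nhdsWithin_iff.mp hmul
    filter_upwards [h] with x hx
    by_cases hx0 : x = 0
    · subst hx0; simpa using h0
    · exact hx (by simpa using hx0)
  obtain ⟨Q, hQ⟩ := (hg.sub analyticAt_const : AnalyticAt ℝ (fun x => g x - 1) 0)
  refine ⟨Q, hQ, fun k => ?_⟩
  have hG : HasFPowerSeriesAt g (Q + constFormalMultilinearSeries ℝ ℝ (1:ℝ)) 0 := by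
    have h := hQ.add (hasFPowerSeriesAt_const (c := (1:ℝ)) (e := (0:ℝ)))
    refine h.congr ?_
    filter_upwards with x
    simp
  have hprod := hasFPowerSeriesAt_mul' hG hf
  have hlin := hasFPowerSeriesAt_linear' (P.coeff 1)
  have hser := hprod.eq_formalMultilinearSeries_of_eventually hlin hmul'
  have hk := congrArg (fun p => FormalMultilinearSeries.coeff p k) hser
  simp only [ofScalars_coeff'] at hk
  rw [← hk]
  have hQC : ∀ i, (Q + constFormalMultilinearSeries ℝ ℝ (1:ℝ)).coeff i
      = Q.coeff i + (if i = 0 then 1 else 0) := by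
    intro i
    have : (Q + constFormalMultilinearSeries ℝ ℝ (1:ℝ)).coeff i
        = Q.coeff i + (constFormalMultilinearSeries ℝ ℝ (1:ℝ)).coeff i := rfl
    rw [this]
    congr 1
    cases i with
    | zero => rfl
    | succ m => simp [FormalMultilinearSeries.coeff, constFormalMultilinearSeries]
  have hsum2 : ∑ i ∈ Finset.range (k+1),
      (Q + constFormalMultilinearSeries ℝ ℝ (1:ℝ)).coeff i * P.coeff (k - i)
      = (∑ i ∈ Finset.range (k+1), Q.coeff i * P.coeff (k - i))
        + ∑ i ∈ Finset.range (k+1), (if i = 0 then P.coeff (k - i) else 0) := by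
    rw [← Finset.sum_add_distrib]
    refine Finset.sum_congr rfl fun i _ => ?_
    rw [hQC]
    split_ifs <;> ring
  have hsum3 : ∑ i ∈ Finset.range (k+1), (if i = 0 then P.coeff (k - i) else 0) = P.coeff k := by
    rw [Finset.sum_ite_eq' (Finset.range (k+1)) 0 (fun i => P.coeff (k - i))]
    simp
  rw [hsum2, hsum3]

/-- Viscovatov continued fraction expansion of
`E(x) = ∑ (binom(2n,n)/((2n-1)4^n))² xⁿ`: with `S₀ = E`, the partial numerator
`a_{n+1}` is the linear Maclaurin coefficient of `Sₙ`, and `S_{n+1}` is the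
analytic function agreeing with `a_{n+1} x / (Sₙ(x) - 1)` near (but off) `0`.
Then `a₁ = 1/4`, `a₂ = -1/16`, `a₃ = -3/16`, `a₄ = -3/16`, `a₅ = -11/48`. -/
theorem stmt_16 (S : ℕ → ℝ → ℝ) (a : ℕ → ℝ)
    (hanalytic : ∀ n, AnalyticAt ℝ (S n) 0)
    (hS0 : S 0 = fun x : ℝ =>
      ∑' n : ℕ, ((Nat.choose (2 * n) n : ℝ) / ((2 * (n : ℝ) - 1) * 4 ^ n)) ^ 2 * x ^ n)
    (ha : ∀ n, a (n + 1) = deriv (S n) 0)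
    (hrec : ∀ n, ∀ᶠ x in nhdsWithin (0:ℝ) {0}ᶜ,
      S (n + 1) x = a (n + 1) * x / (S n x - 1)) :
    a 1 = 1/4 ∧ a 2 = -1/16 ∧ a 3 = -3/16 ∧ a 4 = -3/16 ∧ a 5 = -11/48 := by
  classical
  have hE : HasFPowerSeriesAt (S 0) (FormalMultilinearSeries.ofScalars ℝ eCoeff) 0 := by
    rw [hS0]; exact hasFPowerSeriesAt_E
  obtain ⟨P0, hT0, pc⟩ : ∃ P0 : FormalMultilinearSeries ℝ ℝ ℝ,
      HasFPowerSeriesAt (fun x => S 0 x - 1) P0 0 ∧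
      ∀ k, P0.coeff k = eCoeff k - (if k = 0 then 1 else 0) := by
    refine ⟨FormalMultilinearSeries.ofScalars ℝ eCoeff - constFormalMultilinearSeries ℝ ℝ 1,
      ?_, fun k => ?_⟩
    · have h := hE.sub (hasFPowerSeriesAt_const (c := (1:ℝ)) (e := (0:ℝ)))
      refine h.congr ?_
      filter_upwards with x
      simp
    · have h1 : (FormalMultilinearSeries.ofScalars ℝ eCoeff
          - constFormalMultilinearSeries ℝ ℝ 1).coeff k
          = (FormalMultilinearSeries.ofScalars ℝ eCoeff).coeff k
            - (constFormalMultilinearSeries ℝ ℝ (1:ℝ)).coeff k := rfl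
      rw [h1, ofScalars_coeff']
      congr 1
      cases k with
      | zero => rfl
      | succ m => simp [FormalMultilinearSeries.coeff, constFormalMultilinearSeries]
  have ec0 : eCoeff 0 = 1 := by norm_num [eCoeff]
  have ec1 : eCoeff 1 = 1/4 := by
    have : Nat.choose 2 1 = 2 := by decide
    norm_num [eCoeff, this]
  have ec2 : eCoeff 2 = 1/64 := by
    have : Nat.choose 4 2 = 6 := by decide
    norm_num [eCoeff, this]
  have ec3 : eCoeff 3 = 1/256 := by
    have : Nat.choose 6 3 = 20 := by decide
    norm_num [eCoeff, this]
  have ec4 : eCoeff 4 = 25/16384 := by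
    have : Nat.choose 8 4 = 70 := by decide
    norm_num [eCoeff, this]
  have ec5 : eCoeff 5 = 49/65536 := by
    have : Nat.choose 10 5 = 252 := by decide
    norm_num [eCoeff, this]
  have p00 : P0.coeff 0 = (0:ℝ) := by rw [pc 0, ec0]; norm_num
  have p01 : P0.coeff 1 = (1/4:ℝ) := by rw [pc 1, ec1]; norm_num
  have p02 : P0.coeff 2 = (1/64:ℝ) := by rw [pc 2, ec2]; norm_num
  have p03 : P0.coeff 3 = (1/256:ℝ) := by rw [pc 3, ec3]; norm_num
  have p04 : P0.coeff 4 = (25/16384:ℝ) := by rw [pc 4, ec4]; norm_num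
  have p05 : P0.coeff 5 = (49/65536:ℝ) := by rw [pc 5, ec5]; norm_num
  -- stage 1
  have hd0 : deriv (S 0) 0 = P0.coeff 1 := by
    rw [← deriv_sub_const (1:ℝ)]
    exact hT0.deriv
  have hrec0' : ∀ᶠ x in nhdsWithin (0:ℝ) {0}ᶜ,
      S 1 x = P0.coeff 1 * x / ((fun x => S 0 x - 1) x) := by
    filter_upwards [hrec 0] with x hx
    rw [hx, ha 0, hd0]
  obtain ⟨Q1, hQ1, heq1⟩ := step' hT0 (hanalytic 1)
    (by rw [p01]; norm_num) hrec0'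
  have hT1 : HasFPowerSeriesAt (fun x => S 1 x - 1) Q1 0 := hQ1
  have q10 : Q1.coeff 0 = (0 : ℝ) := by
    have h := heq1 1
    simp only [Finset.sum_range_succ, Finset.sum_range_zero] at h
    norm_num [p00, p01] at h
    linarith
  have q11 : Q1.coeff 1 = (-1/16 : ℝ) := by
    have h := heq1 2
    simp only [Finset.sum_range_succ, Finset.sum_range_zero] at h
    norm_num [p00, p01, p02, q10] at h
    linarith
  have q12 : Q1.coeff 2 = (-3/256 : ℝ) := by
    have h := heq1 3
    simp only [Finset.sum_range_succ, Finset.sum_range_zero] at h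
    norm_num [p00, p01, p02, p03, q10, q11] at h
    linarith
  have q13 : Q1.coeff 3 = (-9/2048 : ℝ) := by
    have h := heq1 4
    simp only [Finset.sum_range_succ, Finset.sum_range_zero] at h
    norm_num [p00, p01, p02, p03, p04, q10, q11, q12] at h
    linarith
  have q14 : Q1.coeff 4 = (-141/65536 : ℝ) := by
    have h := heq1 5
    simp only [Finset.sum_range_succ, Finset.sum_range_zero] at h
    norm_num [p00, p01, p02, p03, p04, p05, q10, q11, q12, q13] at h
    linarith
  -- stage 2
  have hd1 : deriv (S 1) 0 = Q1.coeff 1 := by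
    rw [← deriv_sub_const (1:ℝ)]
    exact hT1.deriv
  have hrec1' : ∀ᶠ x in nhdsWithin (0:ℝ) {0}ᶜ,
      S 2 x = Q1.coeff 1 * x / ((fun x => S 1 x - 1) x) := by
    filter_upwards [hrec 1] with x hx
    rw [hx, ha 1, hd1]
  obtain ⟨Q2, hQ2, heq2⟩ := step' hT1 (hanalytic 2)
    (by rw [q11]; norm_num) hrec1'
  have hT2 : HasFPowerSeriesAt (fun x => S 2 x - 1) Q2 0 := hQ2
  have q20 : Q2.coeff 0 = (0 : ℝ) := by
    have h := heq2 1
    simp only [Finset.sum_range_succ, Finset.sum_range_zero] at h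
    norm_num [q10, q11] at h
    linarith
  have q21 : Q2.coeff 1 = (-3/16 : ℝ) := by
    have h := heq2 2
    simp only [Finset.sum_range_succ, Finset.sum_range_zero] at h
    norm_num [q10, q11, q12, q20] at h
    linarith
  have q22 : Q2.coeff 2 = (-9/256 : ℝ) := by
    have h := heq2 3
    simp only [Finset.sum_range_succ, Finset.sum_range_zero] at h
    norm_num [q10, q11, q12, q13, q20, q21] at h
    linarith
  have q23 : Q2.coeff 3 = (-15/1024 : ℝ) := by
    have h := heq2 4
    simp only [Finset.sum_range_succ, Finset.sum_range_zero] at h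
    norm_num [q10, q11, q12, q13, q14, q20, q21, q22] at h
    linarith
  -- stage 3
  have hd2 : deriv (S 2) 0 = Q2.coeff 1 := by
    rw [← deriv_sub_const (1:ℝ)]
    exact hT2.deriv
  have hrec2' : ∀ᶠ x in nhdsWithin (0:ℝ) {0}ᶜ,
      S 3 x = Q2.coeff 1 * x / ((fun x => S 2 x - 1) x) := by
    filter_upwards [hrec 2] with x hx
    rw [hx, ha 2, hd2]
  obtain ⟨Q3, hQ3, heq3⟩ := step' hT2 (hanalytic 3)
    (by rw [q21]; norm_num) hrec2'
  have hT3 : HasFPowerSeriesAt (fun x => S 3 x - 1) Q3 0 := hQ3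
  have q30 : Q3.coeff 0 = (0 : ℝ) := by
    have h := heq3 1
    simp only [Finset.sum_range_succ, Finset.sum_range_zero] at h
    norm_num [q20, q21] at h
    linarith
  have q31 : Q3.coeff 1 = (-3/16 : ℝ) := by
    have h := heq3 2
    simp only [Finset.sum_range_succ, Finset.sum_range_zero] at h
    norm_num [q20, q21, q22, q30] at h
    linarith
  have q32 : Q3.coeff 2 = (-11/256 : ℝ) := by
    have h := heq3 3
    simp only [Finset.sum_range_succ, Finset.sum_range_zero] at h
    norm_num [q20, q21, q22, q23, q30, q31] at h
    linarith
  -- stage 4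
  have hd3 : deriv (S 3) 0 = Q3.coeff 1 := by
    rw [← deriv_sub_const (1:ℝ)]
    exact hT3.deriv
  have hrec3' : ∀ᶠ x in nhdsWithin (0:ℝ) {0}ᶜ,
      S 4 x = Q3.coeff 1 * x / ((fun x => S 3 x - 1) x) := by
    filter_upwards [hrec 3] with x hx
    rw [hx, ha 3, hd3]
  obtain ⟨Q4, hQ4, heq4⟩ := step' hT3 (hanalytic 4)
    (by rw [q31]; norm_num) hrec3'
  have hT4 : HasFPowerSeriesAt (fun x => S 4 x - 1) Q4 0 := hQ4
  have q40 : Q4.coeff 0 = (0 : ℝ) := by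
    have h := heq4 1
    simp only [Finset.sum_range_succ, Finset.sum_range_zero] at h
    norm_num [q30, q31] at h
    linarith
  have q41 : Q4.coeff 1 = (-11/48 : ℝ) := by
    have h := heq4 2
    simp only [Finset.sum_range_succ, Finset.sum_range_zero] at h
    norm_num [q30, q31, q32, q40] at h
    linarith
  have hd4 : deriv (S 4) 0 = Q4.coeff 1 := by
    rw [← deriv_sub_const (1:ℝ)]
    exact hT4.deriv
  refine ⟨?_, ?_, ?_, ?_, ?_⟩
  · rw [ha 0, hd0, p01]
  · rw [ha 1, hd1, q11]
  · rw [ha 2, hd2, q21]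
  · rw [ha 3, hd3, q31]
  · rw [ha 4, hd4, q41]
end

section
/- For 0 ≤ x < 1, Ramanujan's approximations underestimate in order: R₁(x) ≤ R₂(x) ≤ E(x), where R₁(x) = 3 - √(4-x), R₂(x) = 1 + 3x/(10 + √(4-3x)), and E(x) = ∑ (binom(2n,n)/((2n-1)4^n))² x^n. -/
private lemma key2_aux (x : ℝ) (hx0 : 0 ≤ x) (hxle : x ≤ 1) :
    (3 - 10*(1/4 + x/64 + x^2/256 + 25*x^3/16384 + 49*x^4/65536 + 441*x^5/1048576
      + 1089*x^6/4194304 + 184041*x^7/1073741824 + 511225*x^8/4294967296))^2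
    ≤ (4 - 3*x) * (1/4 + x/64 + x^2/256 + 25*x^3/16384 + 49*x^4/65536 + 441*x^5/1048576
      + 1089*x^6/4194304 + 184041*x^7/1073741824 + 511225*x^8/4294967296)^2 := by
  have h4 : x^9 ≤ x^4 := pow_le_pow_of_le_one hx0 hxle (by norm_num)
  have h5 : x^9 ≤ x^5 := pow_le_pow_of_le_one hx0 hxle (by norm_num)
  have h6 : x^9 ≤ x^6 := pow_le_pow_of_le_one hx0 hxle (by norm_num)
  have h7 : x^9 ≤ x^7 := pow_le_pow_of_le_one hx0 hxle (by norm_num)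
  have h8 : x^9 ≤ x^8 := pow_le_pow_of_le_one hx0 hxle (by norm_num)
  have g10 : x^10 ≤ x^9 := pow_le_pow_of_le_one hx0 hxle (by norm_num)
  have g11 : x^11 ≤ x^9 := pow_le_pow_of_le_one hx0 hxle (by norm_num)
  have g12 : x^12 ≤ x^9 := pow_le_pow_of_le_one hx0 hxle (by norm_num)
  have g13 : x^13 ≤ x^9 := pow_le_pow_of_le_one hx0 hxle (by norm_num)
  have g14 : x^14 ≤ x^9 := pow_le_pow_of_le_one hx0 hxle (by norm_num)
  have g15 : x^15 ≤ x^9 := pow_le_pow_of_le_one hx0 hxle (by norm_num)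
  have g16 : x^16 ≤ x^9 := pow_le_pow_of_le_one hx0 hxle (by norm_num)
  have g17 : x^17 ≤ x^9 := pow_le_pow_of_le_one hx0 hxle (by norm_num)
  have h9 : 0 ≤ x^9 := pow_nonneg hx0 9
  nlinarith [h4,h5,h6,h7,h8,g10,g11,g12,g13,g14,g15,g16,g17,h9]

set_option maxHeartbeats 2000000 in
/-- For `0 ≤ x < 1`, Ramanujan's approximations underestimate in order:
`R₁(x) ≤ R₂(x) ≤ E(x)`. -/
theorem stmt_19 (x : ℝ) (hx0 : 0 ≤ x) (hx1 : x < 1) :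
    3 - Real.sqrt (4 - x) ≤ 1 + 3 * x / (10 + Real.sqrt (4 - 3 * x)) ∧
    1 + 3 * x / (10 + Real.sqrt (4 - 3 * x)) ≤
      ∑' n : ℕ, ((Nat.choose (2 * n) n : ℝ) / ((2 * (n : ℝ) - 1) * 4 ^ n)) ^ 2 * x ^ n := by
  have hxle : x ≤ 1 := hx1.le
  set s : ℝ := Real.sqrt (4 - 3 * x) with hs_def
  set t : ℝ := Real.sqrt (4 - x) with ht_def
  have hs0 : 0 ≤ s := Real.sqrt_nonneg _
  have ht0 : 0 ≤ t := Real.sqrt_nonneg _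
  have hs2 : s ^ 2 = 4 - 3 * x := Real.sq_sqrt (by linarith)
  have ht2 : t ^ 2 = 4 - x := Real.sq_sqrt (by linarith)
  have hsle2 : s ≤ 2 := by nlinarith [hs2, hs0]
  have htle2 : t ≤ 2 := by nlinarith [ht2, ht0]
  have hs1 : 1 ≤ s := by nlinarith [hs2, hs0]
  have h10s : (0:ℝ) < 10 + s := by linarith
  constructor
  · -- R1 ≤ R2
    have ht15 : (3:ℝ)/2 ≤ t := by
      nlinarith [ht2, mul_nonneg (sub_nonneg.2 htle2) ht0]
    have hkey : s ≤ 3 * t - 4 := by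
      nlinarith [sq_nonneg (t - 2), hs2, ht2, hs0, ht15]
    rw [show (3:ℝ) - t = 1 + (2 - t) by ring, add_le_add_iff_left, le_div_iff₀ h10s]
    nlinarith [mul_nonneg (sub_nonneg.2 htle2) (sub_nonneg.2 hkey), ht2]
  · -- R2 ≤ E
    obtain ⟨Qx, hQ_def⟩ : ∃ q : ℝ, q = 1/4 + x/64 + x^2/256 + 25*x^3/16384 + 49*x^4/65536 + 441*x^5/1048576
      + 1089*x^6/4194304 + 184041*x^7/1073741824 + 511225*x^8/4294967296 := ⟨_, rfl⟩
    have hQ0 : 0 ≤ Qx := by rw [hQ_def]; positivity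
    have key2 : (3 - 10*Qx)^2 ≤ (4 - 3*x) * Qx^2 := by
      rw [hQ_def]; exact key2_aux x hx0 hxle
    have hsQ : 3 - 10*Qx ≤ s * Qx := by
      have h1 : (3 - 10*Qx)^2 ≤ (s*Qx)^2 := by
        rw [mul_pow, hs2]; exact key2
      nlinarith [h1, mul_nonneg hs0 hQ0]
    have hR2 : 1 + 3 * x / (10 + s) ≤ 1 + x * Qx := by
      rw [add_le_add_iff_left, div_le_iff₀ h10s]
      nlinarith [mul_nonneg hx0 (by linarith : (0:ℝ) ≤ (10 + s) * Qx - 3)]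
    refine hR2.trans ?_
    set f : ℕ → ℝ := fun n => ((Nat.choose (2 * n) n : ℝ) / ((2 * (n : ℝ) - 1) * 4 ^ n)) ^ 2 * x ^ n with hf_def
    have hf_nonneg : ∀ n, 0 ≤ f n := fun n => mul_nonneg (sq_nonneg _) (pow_nonneg hx0 n)
    have hchoose : ∀ n : ℕ, (Nat.choose (2*n) n : ℝ) ≤ 4 ^ n := by
      intro n
      have : Nat.choose (2*n) n ≤ 4 ^ n := by
        calc Nat.choose (2*n) n ≤ ∑ m ∈ Finset.range (2*n+1), Nat.choose (2*n) m :=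
              Finset.single_le_sum (fun i _ => Nat.zero_le _) (Finset.mem_range.2 (by omega))
          _ = 2 ^ (2*n) := Nat.sum_range_choose _
          _ = 4 ^ n := by rw [pow_mul]; norm_num
      exact_mod_cast this
    have hf_le : ∀ n, f n ≤ x ^ n := by
      intro n
      have hxp : 0 ≤ x ^ n := pow_nonneg hx0 n
      have h16 : (1:ℝ) ≤ (4:ℝ) ^ n := one_le_pow₀ (by norm_num)
      have hn1 : (1:ℝ) ≤ (2 * (n:ℝ) - 1) ^ 2 := by
        rcases n with _ | m
        · norm_num
        · push_cast
          nlinarith [Nat.cast_nonneg (α := ℝ) m]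
      have hC : (Nat.choose (2*n) n : ℝ) ≤ 4 ^ n := hchoose n
      have hC0 : (0:ℝ) ≤ (Nat.choose (2*n) n : ℝ) := Nat.cast_nonneg _
      have hsq : ((Nat.choose (2 * n) n : ℝ) / ((2 * (n : ℝ) - 1) * 4 ^ n)) ^ 2 ≤ 1 := by
        rw [div_pow, mul_pow]
        apply div_le_one_of_le₀
        · nlinarith [sq_nonneg ((4:ℝ)^n)]
        · positivity
      have := mul_le_mul_of_nonneg_right hsq hxp
      rw [one_mul] at this
      simpa [hf_def] using this
    have hsumm : Summable f :=
      Summable.of_nonneg_of_le hf_nonneg hf_le (summable_geometric_of_lt_one hx0 hx1)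
    have hlow : ∑ n ∈ Finset.range 10, f n ≤ ∑' n, f n :=
      Summable.sum_le_tsum _ (fun n _ => hf_nonneg n) hsumm
    have hval : ∑ n ∈ Finset.range 10, f n = 1 + x * Qx := by
      have c1 : Nat.choose 2 1 = 2 := by decide
      have c2 : Nat.choose 4 2 = 6 := by decide
      have c3 : Nat.choose 6 3 = 20 := by decide
      have c4 : Nat.choose 8 4 = 70 := by decide
      have c5 : Nat.choose 10 5 = 252 := by decide
      have c6 : Nat.choose 12 6 = 924 := by decide
      have c7 : Nat.choose 14 7 = 3432 := by decide
      have c8 : Nat.choose 16 8 = 12870 := by decide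
      have c9 : Nat.choose 18 9 = 48620 := by decide
      rw [hf_def, hQ_def]
      simp [Finset.sum_range_succ]
      norm_num [c1,c2,c3,c4,c5,c6,c7,c8,c9]
      ring
    rw [← hval]
    exact hlow
end
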